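/- arXiv:math/0303317 — 2 statements merged into one kernel-verified Lean document; each statement's English description precedes it below -/
import Mathlib

section
/- The Orchard crossing numbers of the small wheels satisfy OCN(W_{3,1}) = 2 and OCN(W_{4,1}) = 6. -/
set_option linter.unusedSectionVars false

/-!
Common definitions for the Orchard crossing number
(Feder–Garber, "The Orchard crossing number of an abstract graph").
-/

noncomputable section

/-- Points of the plane. -/
abbrev Pt : Type := ℝ × ℝ

/-- The line through two points of the plane. -/
def lineThrough (p q : Pt) : Set Pt := (affineSpan ℝ ({p, q} : Set Pt) : Set Pt)

/-- A line (or any set) `L` separates the points `P` and `Q` if both lie off `L`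
and they lie in different connected components of the complement of `L`. -/
def Separates (L : Set Pt) (P Q : Pt) : Prop :=
  P ∉ L ∧ Q ∉ L ∧ connectedComponentIn Lᶜ P ≠ connectedComponentIn Lᶜ Q

theorem Separates.symm {L : Set Pt} {P Q : Pt} (h : Separates L P Q) : Separates L Q P :=
  ⟨h.2.1, h.1, h.2.2.symm⟩

/-- A generic configuration: a finite set of points, no three of which are collinear. -/
def GenericConfig (S : Set Pt) : Prop :=
  S.Finite ∧ ∀ p ∈ S, ∀ q ∈ S, ∀ r ∈ S, p ≠ q → p ≠ r → q ≠ r →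
    ¬ Collinear ℝ ({p, q, r} : Set Pt)

/-- A finite set of points is in convex position if every point of it is an extreme
point of its convex hull, i.e. lies outside the convex hull of the other points. -/
def ConvexPosition (S : Set Pt) : Prop :=
  ∀ p ∈ S, p ∉ convexHull ℝ (S \ {p})

variable {V : Type*} [Fintype V] [DecidableEq V]

/-- A rectilinear drawing of a graph on vertex set `V`: an injective placement of the
vertices in the plane whose image is a generic configuration. -/
def IsRectDrawing (f : V → Pt) : Prop :=
  Function.Injective f ∧ GenericConfig (Set.range f)

/-- `sepCount f s t` is `n(s,t)`: the number of (unordered) pairs of vertices, both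
different from `s` and `t`, whose drawn points span a line separating `f s` from `f t`. -/
def sepCount (f : V → Pt) (s t : V) : ℕ :=
  Set.ncard {e : Finset V | ∃ a b : V, e = {a, b} ∧ a ≠ b ∧ s ∉ e ∧ t ∉ e ∧
    Separates (lineThrough (f a) (f b)) (f s) (f t)}

theorem sepCount_symm (f : V → Pt) (s t : V) : sepCount f s t = sepCount f t s := by
  unfold sepCount
  congr 1
  ext e
  constructor
  · rintro ⟨a, b, rfl, hab, hs, ht, hsep⟩
    exact ⟨a, b, rfl, hab, ht, hs, hsep.symm⟩
  · rintro ⟨a, b, rfl, hab, ht, hs, hsep⟩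
    exact ⟨a, b, rfl, hab, hs, ht, hsep.symm⟩

/-- The crossing number `n(R(G))` of a drawing: the sum of `n(s,t)` over all edges. -/
def drawingCrossings (G : SimpleGraph V) (f : V → Pt) : ℕ :=
  ∑ e ∈ G.edgeSet.toFinite.toFinset,
    Sym2.lift ⟨fun s t => sepCount f s t, fun s t => sepCount_symm f s t⟩ e

/-- The Orchard crossing number: the minimum of `n(R(G))` over all rectilinear drawings. -/
def OCN (G : SimpleGraph V) : ℕ :=
  sInf {n | ∃ f : V → Pt, IsRectDrawing f ∧ drawingCrossings G f = n}

/-- The maximal Orchard crossing number: the maximum of `n(R(G))` over all drawings. -/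
def MOCN (G : SimpleGraph V) : ℕ :=
  sSup {n | ∃ f : V → Pt, IsRectDrawing f ∧ drawingCrossings G f = n}

/-- The open segment drawn for an edge. -/
def edgeSeg (f : V → Pt) (e : Sym2 V) : Set Pt :=
  Sym2.lift ⟨fun a b => openSegment ℝ (f a) (f b), fun a b => openSegment_symm ℝ (f a) (f b)⟩ e

/-- The number of unordered pairs of distinct edges of `G` whose drawn open segments
intersect. -/
def crossPairs (G : SimpleGraph V) (f : V → Pt) : ℕ :=
  Set.ncard {p : Finset (Sym2 V) | ∃ e₁ e₂ : Sym2 V, p = {e₁, e₂} ∧ e₁ ≠ e₂ ∧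
    e₁ ∈ G.edgeSet ∧ e₂ ∈ G.edgeSet ∧ (edgeSeg f e₁ ∩ edgeSeg f e₂).Nonempty}

/-- The rectilinear crossing number: the minimum number of crossing pairs of edges
over all rectilinear drawings. -/
def rcr (G : SimpleGraph V) : ℕ :=
  sInf {n | ∃ f : V → Pt, IsRectDrawing f ∧ crossPairs G f = n}

/-- The number of 4-element subsets of the drawn points which are in convex position. -/
def convexFour (f : V → Pt) : ℕ :=
  Set.ncard {Q : Finset Pt | Q.card = 4 ∧ (Q : Set Pt) ⊆ Set.range f ∧
    ConvexPosition (Q : Set Pt)}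

/-- The cyclic successor on `Fin n`. -/
def nextFin {n : ℕ} (i : Fin n) : Fin n :=
  ⟨(i.val + 1) % n, Nat.mod_lt _ (Nat.zero_lt_of_lt i.isLt)⟩

/-- The star graph `K_{n,1}` on `n+1` vertices: the center `0` is joined to each of
the `n` outer vertices. -/
def starGraph (n : ℕ) : SimpleGraph (Fin (n + 1)) :=
  SimpleGraph.fromEdgeSet {e | ∃ i : Fin n, e = s((0 : Fin (n + 1)), i.succ)}

/-- The wheel graph `W_{n,1}` on `n+1` vertices: a cycle on the `n` outer vertices
together with a hub `0` joined to each of them. -/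
def wheelGraph (n : ℕ) : SimpleGraph (Fin (n + 1)) :=
  SimpleGraph.fromEdgeSet
    ({e | ∃ i : Fin n, e = s((0 : Fin (n + 1)), i.succ)} ∪
     {e | ∃ i : Fin n, e = s(i.succ, (nextFin i).succ)})

/-- The cycle graph `C_n` on the outer vertices `1, …, n` of `Fin (n+1)`, together
with the isolated vertex `0`. -/
def cycleWithIsolated (n : ℕ) : SimpleGraph (Fin (n + 1)) :=
  SimpleGraph.fromEdgeSet {e | ∃ i : Fin n, e = s(i.succ, (nextFin i).succ)}

/-- `HullCycle f` says that for every `i`, all the other drawn points lie (strictly) on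
one side of the line through `f i` and `f (i+1)`; for an injective generic placement this
means the points are in convex position and occur around the convex hull exactly in the
cyclic order `f 0, f 1, …`. -/
def HullCycle {m : ℕ} (f : Fin m → Pt) : Prop :=
  ∀ i j l : Fin m, j ≠ i → j ≠ nextFin i → l ≠ i → l ≠ nextFin i →
    ¬ Separates (lineThrough (f i) (f (nextFin i))) (f j) (f l)

end

namespace OCNP
open Set
noncomputable def dd (p q r : Pt) : ℝ := (q.1-p.1)*(r.2-p.2) - (q.2-p.2)*(r.1-p.1)

lemma collinear_dd {p q r : Pt} (h : Collinear ℝ ({p,q,r} : Set Pt)) : dd p q r = 0 := by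
  rw [collinear_iff_exists_forall_eq_smul_vadd] at h
  obtain ⟨p0, v, hv⟩ := h
  obtain ⟨a, ha⟩ := hv p (by simp)
  obtain ⟨b, hb⟩ := hv q (by simp)
  obtain ⟨c, hc⟩ := hv r (by simp)
  subst ha hb hc
  simp only [dd, Prod.fst_add, Prod.snd_add, Prod.smul_fst, Prod.smul_snd, smul_eq_mul,
    Prod.fst_vadd, Prod.snd_vadd, vadd_eq_add]
  ring

lemma collinear_of_mem_line {p q x : Pt} (h : x ∈ lineThrough p q) :
    Collinear ℝ ({p,q,x} : Set Pt) := by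
  have h2 : Collinear ℝ (insert x ({p, q} : Set Pt)) :=
    (collinear_insert_iff_of_mem_affineSpan h).mpr (collinear_pair ℝ p q)
  have hs : ({p,q,x} : Set Pt) = insert x ({p,q} : Set Pt) := by
    ext y; simp; tauto
  rwa [hs]

lemma dd_of_mem_line {p q x : Pt} (h : x ∈ lineThrough p q) : dd p q x = 0 :=
  collinear_dd (collinear_of_mem_line h)

lemma mem_line_of_dd {p q x : Pt} (hpq : p ≠ q) (h : dd p q x = 0) : x ∈ lineThrough p q := by
  have hne : q.1 - p.1 ≠ 0 ∨ q.2 - p.2 ≠ 0 := by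
    by_contra hc
    push_neg at hc
    exact hpq (Prod.ext (by linarith [hc.1]) (by linarith [hc.2]))
  have hex : ∃ t : ℝ, x = AffineMap.lineMap p q t := by
    rcases hne with h1 | h2
    · refine ⟨(x.1 - p.1) / (q.1 - p.1), ?_⟩
      simp only [AffineMap.lineMap_apply, vsub_eq_sub, vadd_eq_add]
      apply Prod.ext
      · simp only [Prod.fst_add, Prod.smul_fst, Prod.fst_sub, smul_eq_mul]
        field_simp
        ring
      · simp only [Prod.snd_add, Prod.smul_snd, Prod.snd_sub, smul_eq_mul]
        simp only [dd] at h
        field_simp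
        nlinarith [h]
    · refine ⟨(x.2 - p.2) / (q.2 - p.2), ?_⟩
      simp only [AffineMap.lineMap_apply, vsub_eq_sub, vadd_eq_add]
      apply Prod.ext
      · simp only [Prod.fst_add, Prod.smul_fst, Prod.fst_sub, smul_eq_mul]
        simp only [dd] at h
        field_simp
        nlinarith [h]
      · simp only [Prod.snd_add, Prod.smul_snd, Prod.snd_sub, smul_eq_mul]
        field_simp
        ring
  obtain ⟨t, rfl⟩ := hex
  exact AffineMap.lineMap_mem_affineSpan_pair t p q

lemma dd_ne_of_not_collinear {p q r : Pt} (h : ¬ Collinear ℝ ({p,q,r} : Set Pt)) :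
    dd p q r ≠ 0 := by
  intro h0
  by_cases hpq : p = q
  · subst hpq
    refine h ?_
    have hs : ({p,p,r} : Set Pt) = {p, r} := by simp
    rw [hs]; exact collinear_pair ℝ p r
  · exact h (collinear_of_mem_line (mem_line_of_dd hpq h0))

lemma dd_continuous (p q : Pt) : Continuous (fun x : Pt => dd p q x) := by
  unfold dd; fun_prop

lemma convex_pos {p q : Pt} : Convex ℝ {x : Pt | 0 < dd p q x} := by
  intro x hx y hy a b ha hb hab
  simp only [Set.mem_setOf_eq] at *
  have : dd p q (a • x + b • y) = a * dd p q x + b * dd p q y := by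
    simp only [dd, Prod.fst_add, Prod.snd_add, Prod.smul_fst, Prod.smul_snd, smul_eq_mul]
    have hb' : b = 1 - a := by linarith
    subst hb'; ring
  rw [this]
  rcases ha.lt_or_eq with ha' | ha'
  · rcases hb.lt_or_eq with hb' | hb'
    · positivity
    · rw [← hb']; simpa using by positivity
  · rw [← ha']
    have : b = 1 := by linarith
    simp [this, hy]

lemma convex_neg {p q : Pt} : Convex ℝ {x : Pt | dd p q x < 0} := by
  intro x hx y hy a b ha hb hab
  simp only [Set.mem_setOf_eq] at *
  have : dd p q (a • x + b • y) = a * dd p q x + b * dd p q y := by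
    simp only [dd, Prod.fst_add, Prod.snd_add, Prod.smul_fst, Prod.smul_snd, smul_eq_mul]
    have hb' : b = 1 - a := by linarith
    subst hb'; ring
  rw [this]
  rcases ha.lt_or_eq with ha' | ha'
  · rcases hb.lt_or_eq with hb' | hb'
    · have := mul_neg_of_pos_of_neg ha' hx
      have := mul_neg_of_pos_of_neg hb' hy
      linarith
    · rw [← hb']
      have := mul_neg_of_pos_of_neg ha' hx
      linarith
  · rw [← ha']
    have : b = 1 := by linarith
    simp [this, hy]

lemma not_separates_of_same_sign {p q a b : Pt} (h : 0 < dd p q a * dd p q b) :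
    ¬ Separates (lineThrough p q) a b := by
  rintro ⟨-, -, hcomp⟩
  rcases mul_pos_iff.mp h with ⟨ha, hb⟩ | ⟨ha, hb⟩
  · have hsub : {x : Pt | 0 < dd p q x} ⊆ (lineThrough p q)ᶜ := by
      intro x hx hxL
      simp only [Set.mem_setOf_eq] at hx
      rw [dd_of_mem_line hxL] at hx; exact lt_irrefl 0 hx
    have hC := (convex_pos (p := p) (q := q)).isPreconnected
    have h1 : {x : Pt | 0 < dd p q x} ⊆ connectedComponentIn (lineThrough p q)ᶜ a :=
      hC.subset_connectedComponentIn ha hsub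
    exact hcomp (connectedComponentIn_eq (h1 hb)) |>.elim
  · have hsub : {x : Pt | dd p q x < 0} ⊆ (lineThrough p q)ᶜ := by
      intro x hx hxL
      simp only [Set.mem_setOf_eq] at hx
      rw [dd_of_mem_line hxL] at hx; exact lt_irrefl 0 hx
    have hC := (convex_neg (p := p) (q := q)).isPreconnected
    have h1 : {x : Pt | dd p q x < 0} ⊆ connectedComponentIn (lineThrough p q)ᶜ a :=
      hC.subset_connectedComponentIn ha hsub
    exact hcomp (connectedComponentIn_eq (h1 hb)) |>.elim

lemma separates_of_opp_sign {p q a b : Pt} (hpq : p ≠ q) (h : dd p q a * dd p q b < 0) :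
    Separates (lineThrough p q) a b := by
  have ha : dd p q a ≠ 0 := fun h0 => by rw [h0] at h; simp at h
  have hb : dd p q b ≠ 0 := fun h0 => by rw [h0] at h; simp at h
  refine ⟨fun hm => ha (dd_of_mem_line hm), fun hm => hb (dd_of_mem_line hm), ?_⟩
  intro hcomp
  have haC : a ∈ connectedComponentIn (lineThrough p q)ᶜ a :=
    mem_connectedComponentIn (fun hm => ha (dd_of_mem_line hm))
  have hbC : b ∈ connectedComponentIn (lineThrough p q)ᶜ a := by
    rw [hcomp]
    exact mem_connectedComponentIn (fun hm => hb (dd_of_mem_line hm))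
  have hconn : IsPreconnected (connectedComponentIn (lineThrough p q)ᶜ a) :=
    isPreconnected_connectedComponentIn
  have hiv := hconn.intermediate_value haC hbC (dd_continuous p q).continuousOn
  have h0 : (0:ℝ) ∈ Set.Icc (dd p q a) (dd p q b) ∪ Set.Icc (dd p q b) (dd p q a) := by
    rcases mul_neg_iff.mp h with ⟨h1, h2⟩ | ⟨h1, h2⟩
    · right; exact ⟨le_of_lt h2, le_of_lt h1⟩
    · left; exact ⟨le_of_lt h1, le_of_lt h2⟩
  have hx : ∃ x ∈ connectedComponentIn (lineThrough p q)ᶜ a, dd p q x = 0 := by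
    rcases h0 with h0 | h0
    · obtain ⟨x, hx1, hx2⟩ := hiv h0
      exact ⟨x, hx1, hx2⟩
    · have hiv2 := hconn.intermediate_value hbC haC (dd_continuous p q).continuousOn
      obtain ⟨x, hx1, hx2⟩ := hiv2 h0
      exact ⟨x, hx1, hx2⟩
  obtain ⟨x, hxC, hx0⟩ := hx
  exact (connectedComponentIn_subset _ _ hxC) (mem_line_of_dd hpq hx0)

open scoped Classical in
noncomputable def I (p : Prop) : ℕ := if p then 1 else 0

lemma I_le_one (p : Prop) : I p ≤ 1 := by unfold I; split <;> simp
lemma I_congr {p q : Prop} (h : p ↔ q) : I p = I q := by unfold I; split <;> split <;> tauto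
lemma one_le_I {p : Prop} (h : p) : 1 ≤ I p := by unfold I; split <;> tauto

section Count
variable {V : Type*} [Fintype V] [DecidableEq V]

lemma sepCount_ge3 (f : V → Pt) (s t a1 b1 a2 b2 a3 b3 : V)
    (h1 : a1 ≠ b1) (h2 : a2 ≠ b2) (h3 : a3 ≠ b3)
    (hs1 : s ∉ ({a1,b1} : Finset V)) (ht1 : t ∉ ({a1,b1} : Finset V))
    (hs2 : s ∉ ({a2,b2} : Finset V)) (ht2 : t ∉ ({a2,b2} : Finset V))
    (hs3 : s ∉ ({a3,b3} : Finset V)) (ht3 : t ∉ ({a3,b3} : Finset V))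
    (h12 : ({a1,b1} : Finset V) ≠ {a2,b2}) (h13 : ({a1,b1} : Finset V) ≠ {a3,b3})
    (h23 : ({a2,b2} : Finset V) ≠ {a3,b3}) :
    I (Separates (lineThrough (f a1) (f b1)) (f s) (f t)) +
    I (Separates (lineThrough (f a2) (f b2)) (f s) (f t)) +
    I (Separates (lineThrough (f a3) (f b3)) (f s) (f t)) ≤ sepCount f s t := by
  classical
  set S := {e : Finset V | ∃ a b : V, e = {a, b} ∧ a ≠ b ∧ s ∉ e ∧ t ∉ e ∧
    Separates (lineThrough (f a) (f b)) (f s) (f t)} with hS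
  have hfin : S.Finite := Set.toFinite _
  have hmem : ∀ (a b : V), a ≠ b → s ∉ ({a,b} : Finset V) → t ∉ ({a,b} : Finset V) →
      Separates (lineThrough (f a) (f b)) (f s) (f t) → ({a,b} : Finset V) ∈ S := by
    intro a b hab hs ht hsep
    exact ⟨a, b, rfl, hab, hs, ht, hsep⟩
  rw [sepCount, ← hS]
  by_cases c1 : Separates (lineThrough (f a1) (f b1)) (f s) (f t) <;>
  by_cases c2 : Separates (lineThrough (f a2) (f b2)) (f s) (f t) <;>
  by_cases c3 : Separates (lineThrough (f a3) (f b3)) (f s) (f t) <;>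
  simp only [I, c1, c2, c3, if_true, if_false, if_pos, if_neg, not_false_iff]
  · -- all three
    have hsub : ({({a1,b1} : Finset V), {a2,b2}, {a3,b3}} : Set (Finset V)) ⊆ S := by
      intro e he
      rcases he with rfl | rfl | rfl
      · exact hmem _ _ h1 hs1 ht1 c1
      · exact hmem _ _ h2 hs2 ht2 c2
      · exact hmem _ _ h3 hs3 ht3 c3
    have := Set.ncard_le_ncard hsub hfin
    have hcard : ({({a1,b1} : Finset V), {a2,b2}, {a3,b3}} : Set (Finset V)).ncard = 3 := by
      rw [Set.ncard_insert_of_notMem (by simp [h12, h13]),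
        Set.ncard_insert_of_notMem (by simp [h23]), Set.ncard_singleton]
    omega
  · -- c1 c2
    have hsub : ({({a1,b1} : Finset V), {a2,b2}} : Set (Finset V)) ⊆ S := by
      intro e he
      rcases he with rfl | rfl
      · exact hmem _ _ h1 hs1 ht1 c1
      · exact hmem _ _ h2 hs2 ht2 c2
    have := Set.ncard_le_ncard hsub hfin
    have hcard := Set.ncard_pair h12
    omega
  · -- c1 c3
    have hsub : ({({a1,b1} : Finset V), {a3,b3}} : Set (Finset V)) ⊆ S := by
      intro e he
      rcases he with rfl | rfl
      · exact hmem _ _ h1 hs1 ht1 c1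
      · exact hmem _ _ h3 hs3 ht3 c3
    have := Set.ncard_le_ncard hsub hfin
    have hcard := Set.ncard_pair h13
    omega
  · -- c1
    have hsub : ({({a1,b1} : Finset V)} : Set (Finset V)) ⊆ S := by
      intro e he; rcases he with rfl
      exact hmem _ _ h1 hs1 ht1 c1
    have := Set.ncard_le_ncard hsub hfin
    have hcard := Set.ncard_singleton ({a1,b1} : Finset V)
    omega
  · -- c2 c3
    have hsub : ({({a2,b2} : Finset V), {a3,b3}} : Set (Finset V)) ⊆ S := by
      intro e he
      rcases he with rfl | rfl
      · exact hmem _ _ h2 hs2 ht2 c2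
      · exact hmem _ _ h3 hs3 ht3 c3
    have := Set.ncard_le_ncard hsub hfin
    have hcard := Set.ncard_pair h23
    omega
  · -- c2
    have hsub : ({({a2,b2} : Finset V)} : Set (Finset V)) ⊆ S := by
      intro e he; rcases he with rfl
      exact hmem _ _ h2 hs2 ht2 c2
    have := Set.ncard_le_ncard hsub hfin
    have hcard := Set.ncard_singleton ({a2,b2} : Finset V)
    omega
  · -- c3
    have hsub : ({({a3,b3} : Finset V)} : Set (Finset V)) ⊆ S := by
      intro e he; rcases he with rfl
      exact hmem _ _ h3 hs3 ht3 c3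
    have := Set.ncard_le_ncard hsub hfin
    have hcard := Set.ncard_singleton ({a3,b3} : Finset V)
    omega
  · omega

lemma sepCount_ge1 (f : V → Pt) (s t a b : V) (h1 : a ≠ b)
    (hs1 : s ∉ ({a,b} : Finset V)) (ht1 : t ∉ ({a,b} : Finset V)) :
    I (Separates (lineThrough (f a) (f b)) (f s) (f t)) ≤ sepCount f s t := by
  classical
  by_cases c1 : Separates (lineThrough (f a) (f b)) (f s) (f t)
  · have hmem : ({a,b} : Finset V) ∈ {e : Finset V | ∃ a b : V, e = {a, b} ∧ a ≠ b ∧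
        s ∉ e ∧ t ∉ e ∧ Separates (lineThrough (f a) (f b)) (f s) (f t)} :=
      ⟨a, b, rfl, h1, hs1, ht1, c1⟩
    have h2 : 1 ≤ sepCount f s t := by
      rw [sepCount]
      have := Set.ncard_le_ncard (Set.singleton_subset_iff.mpr hmem) (Set.toFinite _)
      simpa using this
    calc I _ ≤ 1 := I_le_one _
      _ ≤ _ := h2
  · simp [I, c1]

lemma sepCount_ub {k : ℕ} (f : V → Pt) (s t : V) (T : Set (Finset V)) (hT : T.Finite)
    (hk : T.ncard ≤ k)
    (hsub : ∀ a b : V, a ≠ b → s ∉ ({a,b} : Finset V) → t ∉ ({a,b} : Finset V) →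
      Separates (lineThrough (f a) (f b)) (f s) (f t) → ({a,b} : Finset V) ∈ T) :
    sepCount f s t ≤ k := by
  rw [sepCount]
  refine le_trans (Set.ncard_le_ncard ?_ hT) hk
  rintro e ⟨a, b, rfl, hab, hs, ht, hsep⟩
  exact hsub a b hab hs ht hsep
end Count
lemma quad_signs {a b c d : ℝ} (ha : a ≠ 0) (hb : b ≠ 0) (hc : c ≠ 0) (hd : d ≠ 0)
    (h : a + b + c + d = 0) :
    (0 < a*b ∧ 0 < c*d) ∨ (0 < a*c ∧ 0 < b*d) ∨ (0 < a*d ∧ 0 < b*c) ∨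
    (0 < a*b ∧ 0 < a*c ∧ 0 < b*c) ∨ (0 < a*b ∧ 0 < a*d ∧ 0 < b*d) ∨
    (0 < a*c ∧ 0 < a*d ∧ 0 < c*d) ∨ (0 < b*c ∧ 0 < b*d ∧ 0 < c*d) := by
  rcases ha.lt_or_gt with ha' | ha' <;>
  rcases hb.lt_or_gt with hb' | hb' <;>
  rcases hc.lt_or_gt with hc' | hc' <;>
  rcases hd.lt_or_gt with hd' | hd' <;>
  first
    | (exfalso; linarith)
    | (exact Or.inl ⟨by nlinarith, by nlinarith⟩)
    | (exact Or.inr (Or.inl ⟨by nlinarith, by nlinarith⟩))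
    | (exact Or.inr (Or.inr (Or.inl ⟨by nlinarith, by nlinarith⟩)))
    | (exact Or.inr (Or.inr (Or.inr (Or.inl ⟨by nlinarith, by nlinarith, by nlinarith⟩))))
    | (exact Or.inr (Or.inr (Or.inr (Or.inr (Or.inl ⟨by nlinarith, by nlinarith, by nlinarith⟩)))))
    | (exact Or.inr (Or.inr (Or.inr (Or.inr (Or.inr (Or.inl ⟨by nlinarith, by nlinarith, by nlinarith⟩))))))
    | (exact Or.inr (Or.inr (Or.inr (Or.inr (Or.inr (Or.inr ⟨by nlinarith, by nlinarith, by nlinarith⟩))))))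

lemma dd_sum (A B C D : Pt) : dd B C D + -(dd A C D) + dd A B D + -(dd A B C) = 0 := by
  simp only [dd]; ring

section FourPoint
variable {A B C D : Pt}

-- product identities
lemma pid_ab (A B C D : Pt) : dd C D A * dd C D B = -(dd B C D * -(dd A C D)) := by
  simp only [dd]; ring
lemma pid_ac (A B C D : Pt) : dd B D A * dd B D C = -(dd B C D * dd A B D) := by
  simp only [dd]; ring
lemma pid_ad (A B C D : Pt) : dd B C A * dd B C D = -(dd B C D * -(dd A B C)) := by
  simp only [dd]; ring
lemma pid_bc (A B C D : Pt) : dd A D B * dd A D C = -(-(dd A C D) * dd A B D) := by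
  simp only [dd]; ring
lemma pid_bd (A B C D : Pt) : dd A C B * dd A C D = -(-(dd A C D) * -(dd A B C)) := by
  simp only [dd]; ring
lemma pid_cd (A B C D : Pt) : dd A B C * dd A B D = -(dd A B D * -(dd A B C)) := by
  simp only [dd]; ring

variable (hCD : C ≠ D) (hBD : B ≠ D) (hBC : B ≠ C) (hAD : A ≠ D) (hAC : A ≠ C) (hAB : A ≠ B)
variable (nA : dd B C D ≠ 0) (nB : dd A C D ≠ 0) (nC : dd A B D ≠ 0) (nD : dd A B C ≠ 0)

include hCD nA nB in
lemma sep_ab (h : 0 < dd B C D * -(dd A C D)) : Separates (lineThrough C D) A B :=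
  separates_of_opp_sign hCD (by rw [pid_ab A B C D]; linarith)

include hBD nA nC in
lemma sep_ac (h : 0 < dd B C D * dd A B D) : Separates (lineThrough B D) A C :=
  separates_of_opp_sign hBD (by rw [pid_ac A B C D]; linarith)

include hBC nA nD in
lemma sep_ad (h : 0 < dd B C D * -(dd A B C)) : Separates (lineThrough B C) A D :=
  separates_of_opp_sign hBC (by rw [pid_ad A B C D]; linarith)

include hAD nB nC in
lemma sep_bc (h : 0 < -(dd A C D) * dd A B D) : Separates (lineThrough A D) B C :=
  separates_of_opp_sign hAD (by rw [pid_bc A B C D]; linarith)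

include hAC nB nD in
lemma sep_bd (h : 0 < -(dd A C D) * -(dd A B C)) : Separates (lineThrough A C) B D :=
  separates_of_opp_sign hAC (by rw [pid_bd A B C D]; linarith)

include hAB nC nD in
lemma sep_cd (h : 0 < dd A B D * -(dd A B C)) : Separates (lineThrough A B) C D :=
  separates_of_opp_sign hAB (by rw [pid_cd A B C D]; linarith)

end FourPoint

section Comb
variable {A B C D : Pt}
variable (hCD : C ≠ D) (hBD : B ≠ D) (hBC : B ≠ C) (hAD : A ≠ D) (hAC : A ≠ C) (hAB : A ≠ B)
variable (nA : dd B C D ≠ 0) (nB : dd A C D ≠ 0) (nC : dd A B D ≠ 0) (nD : dd A B C ≠ 0)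

include hCD hBD hBC hAD hAC hAB nA nB nC nD in
/-- K4 bound: at least two separated pairs among the six. -/
lemma k4_bound :
    2 ≤ I (Separates (lineThrough C D) A B) + I (Separates (lineThrough B D) A C) +
        I (Separates (lineThrough B C) A D) + I (Separates (lineThrough A D) B C) +
        I (Separates (lineThrough A C) B D) + I (Separates (lineThrough A B) C D) := by
  have nB' : -(dd A C D) ≠ 0 := neg_ne_zero.mpr nB
  have nD' : -(dd A B C) ≠ 0 := neg_ne_zero.mpr nD
  rcases quad_signs nA nB' nC nD' (dd_sum A B C D) with
    ⟨h1, h2⟩ | ⟨h1, h2⟩ | ⟨h1, h2⟩ | ⟨h1, h2, h3⟩ | ⟨h1, h2, h3⟩ | ⟨h1, h2, h3⟩ | ⟨h1, h2, h3⟩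
  · have := one_le_I (sep_ab hCD nA nB h1)
    have := one_le_I (sep_cd hAB nC nD h2)
    omega
  · have := one_le_I (sep_ac hBD nA nC h1)
    have := one_le_I (sep_bd hAC nB nD h2)
    omega
  · have := one_le_I (sep_ad hBC nA nD h1)
    have := one_le_I (sep_bc hAD nB nC h2)
    omega
  · have := one_le_I (sep_ab hCD nA nB h1)
    have := one_le_I (sep_ac hBD nA nC h2)
    omega
  · have := one_le_I (sep_ab hCD nA nB h1)
    have := one_le_I (sep_ad hBC nA nD h2)
    omega
  · have := one_le_I (sep_ac hBD nA nC h1)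
    have := one_le_I (sep_ad hBC nA nD h2)
    omega
  · have := one_le_I (sep_bc hAD nB nC h1)
    have := one_le_I (sep_bd hAC nB nD h2)
    omega

include hCD hBD hBC hAD hAC hAB nA nB nC nD in
/-- Cycle-set bound: either two cycle-edge separations, or the two "diagonal" sign facts. -/
lemma q0_bound :
    2 ≤ I (Separates (lineThrough C D) A B) + I (Separates (lineThrough A D) B C) +
        I (Separates (lineThrough A B) C D) + I (Separates (lineThrough B C) A D) ∨
    (dd B D A * dd B D C < 0 ∧ dd A C B * dd A C D < 0) := by
  have nB' : -(dd A C D) ≠ 0 := neg_ne_zero.mpr nB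
  have nD' : -(dd A B C) ≠ 0 := neg_ne_zero.mpr nD
  rcases quad_signs nA nB' nC nD' (dd_sum A B C D) with
    ⟨h1, h2⟩ | ⟨h1, h2⟩ | ⟨h1, h2⟩ | ⟨h1, h2, h3⟩ | ⟨h1, h2, h3⟩ | ⟨h1, h2, h3⟩ | ⟨h1, h2, h3⟩
  · left
    have := one_le_I (sep_ab hCD nA nB h1)
    have := one_le_I (sep_cd hAB nC nD h2)
    omega
  · right
    constructor
    · rw [pid_ac A B C D]; linarith
    · rw [pid_bd A B C D]; linarith
  · left
    have := one_le_I (sep_ad hBC nA nD h1)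
    have := one_le_I (sep_bc hAD nB nC h2)
    omega
  · left
    have := one_le_I (sep_ab hCD nA nB h1)
    have := one_le_I (sep_bc hAD nB nC h3)
    omega
  · left
    have := one_le_I (sep_ab hCD nA nB h1)
    have := one_le_I (sep_ad hBC nA nD h2)
    omega
  · left
    have := one_le_I (sep_ad hBC nA nD h2)
    have := one_le_I (sep_cd hAB nC nD h3)
    omega
  · left
    have := one_le_I (sep_bc hAD nB nC h1)
    have := one_le_I (sep_cd hAB nC nD h3)
    omega

include hCD hBD hBC hAD hAC hAB nA nB nC nD in
/-- Hub-set bound: `A` is the hub, `B`,`D` the gap pair, `C` the middle vertex.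
Slots: edges AB (pair CD), AD (pair BC), AC (pair BD), BC (pair AD), CD (pair AB). -/
lemma hub_bound :
    (1 ≤ I (Separates (lineThrough C D) A B) + I (Separates (lineThrough B C) A D) +
        I (Separates (lineThrough B D) A C) + I (Separates (lineThrough A D) B C) +
        I (Separates (lineThrough A B) C D)) ∧
    (0 < dd B D A * dd B D C →
      2 ≤ I (Separates (lineThrough C D) A B) + I (Separates (lineThrough B C) A D) +
        I (Separates (lineThrough B D) A C) + I (Separates (lineThrough A D) B C) +
        I (Separates (lineThrough A B) C D)) := by
  have nB' : -(dd A C D) ≠ 0 := neg_ne_zero.mpr nB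
  have nD' : -(dd A B C) ≠ 0 := neg_ne_zero.mpr nD
  rcases quad_signs nA nB' nC nD' (dd_sum A B C D) with
    ⟨h1, h2⟩ | ⟨h1, h2⟩ | ⟨h1, h2⟩ | ⟨h1, h2, h3⟩ | ⟨h1, h2, h3⟩ | ⟨h1, h2, h3⟩ | ⟨h1, h2, h3⟩
  · have := one_le_I (sep_ab hCD nA nB h1)
    have := one_le_I (sep_cd hAB nC nD h2)
    exact ⟨by omega, fun _ => by omega⟩
  · -- bad case: pairs (A,C) and (B,D) same sign
    have := one_le_I (sep_ac hBD nA nC h1)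
    refine ⟨by omega, fun hbad => ?_⟩
    exfalso
    have := pid_ac A B C D
    nlinarith
  · have := one_le_I (sep_ad hBC nA nD h1)
    have := one_le_I (sep_bc hAD nB nC h2)
    exact ⟨by omega, fun _ => by omega⟩
  · have := one_le_I (sep_ab hCD nA nB h1)
    have := one_le_I (sep_ac hBD nA nC h2)
    exact ⟨by omega, fun _ => by omega⟩
  · have := one_le_I (sep_ab hCD nA nB h1)
    have := one_le_I (sep_ad hBC nA nD h2)
    exact ⟨by omega, fun _ => by omega⟩
  · have := one_le_I (sep_ac hBD nA nC h1)
    have := one_le_I (sep_ad hBC nA nD h2)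
    exact ⟨by omega, fun _ => by omega⟩
  · have := one_le_I (sep_bc hAD nB nC h1)
    have := one_le_I (sep_cd hAB nC nD h3)
    exact ⟨by omega, fun _ => by omega⟩
end Comb

lemma sep_comm {L : Set Pt} {P Q : Pt} : Separates L P Q ↔ Separates L Q P :=
  ⟨Separates.symm, Separates.symm⟩

lemma w4_edges : (wheelGraph 4).edgeSet.toFinite.toFinset =
    ({s(0,1), s(0,2), s(0,3), s(0,4), s(1,2), s(2,3), s(3,4), s(1,4)} : Finset (Sym2 (Fin 5))) := by
  ext e
  simp only [Set.Finite.mem_toFinset]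
  induction e using Sym2.ind with
  | _ x y =>
    simp only [wheelGraph, SimpleGraph.edgeSet_fromEdgeSet, Set.mem_diff, Set.mem_union,
      Set.mem_setOf_eq]
    constructor
    · rintro ⟨h1, h2⟩
      revert h1 h2
      fin_cases x <;> fin_cases y <;> decide
    · intro h
      revert h
      fin_cases x <;> fin_cases y <;> decide

lemma w3_edges : (wheelGraph 3).edgeSet.toFinite.toFinset =
    ({s(0,1), s(0,2), s(0,3), s(1,2), s(2,3), s(1,3)} : Finset (Sym2 (Fin 4))) := by
  ext e
  simp only [Set.Finite.mem_toFinset]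
  induction e using Sym2.ind with
  | _ x y =>
    simp only [wheelGraph, SimpleGraph.edgeSet_fromEdgeSet, Set.mem_diff, Set.mem_union,
      Set.mem_setOf_eq]
    constructor
    · rintro ⟨h1, h2⟩
      revert h1 h2
      fin_cases x <;> fin_cases y <;> decide
    · intro h
      revert h
      fin_cases x <;> fin_cases y <;> decide

lemma w4_crossings (f : Fin 5 → Pt) : drawingCrossings (wheelGraph 4) f =
    sepCount f 0 1 + sepCount f 0 2 + sepCount f 0 3 + sepCount f 0 4 +
    sepCount f 1 2 + sepCount f 2 3 + sepCount f 3 4 + sepCount f 1 4 := by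
  rw [drawingCrossings, w4_edges]
  rw [Finset.sum_insert (by decide), Finset.sum_insert (by decide),
    Finset.sum_insert (by decide), Finset.sum_insert (by decide),
    Finset.sum_insert (by decide), Finset.sum_insert (by decide),
    Finset.sum_insert (by decide), Finset.sum_singleton]
  simp only [Sym2.lift_mk]
  ring

lemma w3_crossings (f : Fin 4 → Pt) : drawingCrossings (wheelGraph 3) f =
    sepCount f 0 1 + sepCount f 0 2 + sepCount f 0 3 +
    sepCount f 1 2 + sepCount f 2 3 + sepCount f 1 3 := by
  rw [drawingCrossings, w3_edges]
  rw [Finset.sum_insert (by decide), Finset.sum_insert (by decide),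
    Finset.sum_insert (by decide), Finset.sum_insert (by decide),
    Finset.sum_insert (by decide), Finset.sum_singleton]
  simp only [Sym2.lift_mk]
  ring

lemma or_pos {x y z : ℝ} (hx : x ≠ 0) (hy : y ≠ 0) (hz : z ≠ 0) (hyz : y * z < 0) :
    0 < x * y ∨ 0 < x * z := by
  rcases hx.lt_or_gt with h | h <;> rcases hy.lt_or_gt with h' | h' <;>
    rcases hz.lt_or_gt with h'' | h'' <;> first | (left; nlinarith) | (right; nlinarith) |
      (exfalso; nlinarith)

lemma w3_lower (f : Fin 4 → Pt) (hf : IsRectDrawing f) :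
    2 ≤ drawingCrossings (wheelGraph 3) f := by
  obtain ⟨hinj, -, hgen⟩ := hf
  have hne : ∀ i j : Fin 4, i ≠ j → f i ≠ f j := fun i j h => hinj.ne h
  have nd : ∀ i j k : Fin 4, i ≠ j → i ≠ k → j ≠ k → dd (f i) (f j) (f k) ≠ 0 := by
    intro i j k hij hik hjk
    exact dd_ne_of_not_collinear
      (hgen (f i) ⟨i, rfl⟩ (f j) ⟨j, rfl⟩ (f k) ⟨k, rfl⟩ (hne i j hij) (hne i k hik) (hne j k hjk))
  have key := k4_bound (A := f 0) (B := f 1) (C := f 2) (D := f 3)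
    (hne 2 3 (by decide)) (hne 1 3 (by decide)) (hne 1 2 (by decide))
    (hne 0 3 (by decide)) (hne 0 2 (by decide)) (hne 0 1 (by decide))
    (nd 1 2 3 (by decide) (by decide) (by decide))
    (nd 0 2 3 (by decide) (by decide) (by decide))
    (nd 0 1 3 (by decide) (by decide) (by decide))
    (nd 0 1 2 (by decide) (by decide) (by decide))
  have b1 := sepCount_ge1 f 0 1 2 3 (by decide) (by decide) (by decide)
  have b2 := sepCount_ge1 f 0 2 1 3 (by decide) (by decide) (by decide)
  have b3 := sepCount_ge1 f 0 3 1 2 (by decide) (by decide) (by decide)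
  have b4 := sepCount_ge1 f 1 2 0 3 (by decide) (by decide) (by decide)
  have b5 := sepCount_ge1 f 1 3 0 2 (by decide) (by decide) (by decide)
  have b6 := sepCount_ge1 f 2 3 0 1 (by decide) (by decide) (by decide)
  rw [w3_crossings]
  omega

lemma w4_lower (f : Fin 5 → Pt) (hf : IsRectDrawing f) :
    6 ≤ drawingCrossings (wheelGraph 4) f := by
  obtain ⟨hinj, -, hgen⟩ := hf
  have hne : ∀ i j : Fin 5, i ≠ j → f i ≠ f j := fun i j h => hinj.ne h
  have nd : ∀ i j k : Fin 5, i ≠ j → i ≠ k → j ≠ k → dd (f i) (f j) (f k) ≠ 0 := by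
    intro i j k hij hik hjk
    exact dd_ne_of_not_collinear
      (hgen (f i) ⟨i, rfl⟩ (f j) ⟨j, rfl⟩ (f k) ⟨k, rfl⟩ (hne i j hij) (hne i k hik) (hne j k hjk))
  -- per-edge lower bounds in terms of slot indicators
  have b01 := sepCount_ge3 f 0 1 2 3 2 4 4 3 (by decide) (by decide) (by decide)
    (by decide) (by decide) (by decide) (by decide) (by decide) (by decide)
    (by decide) (by decide) (by decide)
  have b02 := sepCount_ge3 f 0 2 1 3 1 4 3 4 (by decide) (by decide) (by decide)
    (by decide) (by decide) (by decide) (by decide) (by decide) (by decide)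
    (by decide) (by decide) (by decide)
  have b03 := sepCount_ge3 f 0 3 1 2 1 4 2 4 (by decide) (by decide) (by decide)
    (by decide) (by decide) (by decide) (by decide) (by decide) (by decide)
    (by decide) (by decide) (by decide)
  have b04 := sepCount_ge3 f 0 4 1 3 2 1 2 3 (by decide) (by decide) (by decide)
    (by decide) (by decide) (by decide) (by decide) (by decide) (by decide)
    (by decide) (by decide) (by decide)
  have b12 := sepCount_ge3 f 1 2 0 3 0 4 3 4 (by decide) (by decide) (by decide)
    (by decide) (by decide) (by decide) (by decide) (by decide) (by decide)
    (by decide) (by decide) (by decide)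
  have b23 := sepCount_ge3 f 2 3 0 1 0 4 1 4 (by decide) (by decide) (by decide)
    (by decide) (by decide) (by decide) (by decide) (by decide) (by decide)
    (by decide) (by decide) (by decide)
  have b34 := sepCount_ge3 f 3 4 0 1 0 2 1 2 (by decide) (by decide) (by decide)
    (by decide) (by decide) (by decide) (by decide) (by decide) (by decide)
    (by decide) (by decide) (by decide)
  have b14 := sepCount_ge3 f 1 4 0 3 0 2 2 3 (by decide) (by decide) (by decide)
    (by decide) (by decide) (by decide) (by decide) (by decide) (by decide)
    (by decide) (by decide) (by decide)
  -- 4-set bounds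
  -- Q4 : hub 0, gap {1,3}, middle 2 : (A,B,C,D) = (f0,f1,f2,f3)
  have hQ4 := hub_bound (A := f 0) (B := f 1) (C := f 2) (D := f 3)
    (hne 2 3 (by decide)) (hne 1 3 (by decide)) (hne 1 2 (by decide))
    (hne 0 3 (by decide)) (hne 0 2 (by decide)) (hne 0 1 (by decide))
    (nd 1 2 3 (by decide) (by decide) (by decide))
    (nd 0 2 3 (by decide) (by decide) (by decide))
    (nd 0 1 3 (by decide) (by decide) (by decide))
    (nd 0 1 2 (by decide) (by decide) (by decide))
  -- Q2 : hub 0, gap {1,3}, middle 4 : (A,B,C,D) = (f0,f1,f4,f3)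
  have hQ2 := hub_bound (A := f 0) (B := f 1) (C := f 4) (D := f 3)
    (hne 4 3 (by decide)) (hne 1 3 (by decide)) (hne 1 4 (by decide))
    (hne 0 3 (by decide)) (hne 0 4 (by decide)) (hne 0 1 (by decide))
    (nd 1 4 3 (by decide) (by decide) (by decide))
    (nd 0 4 3 (by decide) (by decide) (by decide))
    (nd 0 1 3 (by decide) (by decide) (by decide))
    (nd 0 1 4 (by decide) (by decide) (by decide))
  -- Q3 : hub 0, gap {2,4}, middle 1 : (A,B,C,D) = (f0,f2,f1,f4)
  have hQ3 := hub_bound (A := f 0) (B := f 2) (C := f 1) (D := f 4)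
    (hne 1 4 (by decide)) (hne 2 4 (by decide)) (hne 2 1 (by decide))
    (hne 0 4 (by decide)) (hne 0 1 (by decide)) (hne 0 2 (by decide))
    (nd 2 1 4 (by decide) (by decide) (by decide))
    (nd 0 1 4 (by decide) (by decide) (by decide))
    (nd 0 2 4 (by decide) (by decide) (by decide))
    (nd 0 2 1 (by decide) (by decide) (by decide))
  -- Q1 : hub 0, gap {2,4}, middle 3 : (A,B,C,D) = (f0,f2,f3,f4)
  have hQ1 := hub_bound (A := f 0) (B := f 2) (C := f 3) (D := f 4)
    (hne 3 4 (by decide)) (hne 2 4 (by decide)) (hne 2 3 (by decide))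
    (hne 0 4 (by decide)) (hne 0 3 (by decide)) (hne 0 2 (by decide))
    (nd 2 3 4 (by decide) (by decide) (by decide))
    (nd 0 3 4 (by decide) (by decide) (by decide))
    (nd 0 2 4 (by decide) (by decide) (by decide))
    (nd 0 2 3 (by decide) (by decide) (by decide))
  -- Q0 : cycle set (A,B,C,D) = (f1,f2,f3,f4)
  have hQ0 := q0_bound (A := f 1) (B := f 2) (C := f 3) (D := f 4)
    (hne 3 4 (by decide)) (hne 2 4 (by decide)) (hne 2 3 (by decide))
    (hne 1 4 (by decide)) (hne 1 3 (by decide)) (hne 1 2 (by decide))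
    (nd 2 3 4 (by decide) (by decide) (by decide))
    (nd 1 3 4 (by decide) (by decide) (by decide))
    (nd 1 2 4 (by decide) (by decide) (by decide))
    (nd 1 2 3 (by decide) (by decide) (by decide))
  -- reconcile indicator orderings
  have c34 : I (Separates (lineThrough (f 0) (f 1)) (f 4) (f 3)) =
      I (Separates (lineThrough (f 0) (f 1)) (f 3) (f 4)) := I_congr sep_comm
  have c12 : I (Separates (lineThrough (f 0) (f 4)) (f 2) (f 1)) =
      I (Separates (lineThrough (f 0) (f 4)) (f 1) (f 2)) := I_congr sep_comm
  rw [c34] at hQ2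
  rw [c12] at hQ3
  rw [w4_crossings]
  rcases hQ0 with h2 | ⟨hbad1, hbad2⟩
  · -- cycle 4-set already gives 2; each hub set gives ≥ 1
    have := hQ1.1; have := hQ2.1; have := hQ3.1; have := hQ4.1
    omega
  · -- diagonal case
    rcases or_pos (nd 1 3 0 (by decide) (by decide) (by decide))
        (nd 1 3 2 (by decide) (by decide) (by decide))
        (nd 1 3 4 (by decide) (by decide) (by decide)) hbad2 with h24 | h22
    · -- Q4 gets 2
      have h4 := hQ4.2 h24
      rcases or_pos (nd 2 4 0 (by decide) (by decide) (by decide))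
          (nd 2 4 1 (by decide) (by decide) (by decide))
          (nd 2 4 3 (by decide) (by decide) (by decide)) hbad1 with h33 | h11
      · have h3 := hQ3.2 h33
        have := hQ1.1; have := hQ2.1
        omega
      · have h1 := hQ1.2 h11
        have := hQ2.1; have := hQ3.1
        omega
    · -- Q2 gets 2
      have h2' := hQ2.2 h22
      rcases or_pos (nd 2 4 0 (by decide) (by decide) (by decide))
          (nd 2 4 1 (by decide) (by decide) (by decide))
          (nd 2 4 3 (by decide) (by decide) (by decide)) hbad1 with h33 | h11
      · have h3 := hQ3.2 h33
        have := hQ1.1; have := hQ4.1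
        omega
      · have h1 := hQ1.2 h11
        have := hQ3.1; have := hQ4.1
        omega

lemma parabola_drawing {n : ℕ} (g : Fin n → ℝ) (hg : Function.Injective g) :
    IsRectDrawing (fun i => ((g i, (g i)^2) : Pt)) := by
  have hinj : Function.Injective (fun i => ((g i, (g i)^2) : Pt)) := by
    intro i j hij
    simp only [Prod.mk.injEq] at hij
    exact hg hij.1
  refine ⟨hinj, Set.finite_range _, ?_⟩
  rintro p ⟨i, rfl⟩ q ⟨j, rfl⟩ r ⟨k, rfl⟩ hpq hpr hqr hcol
  have h0 := collinear_dd hcol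
  simp only [dd] at h0
  have hij : g i ≠ g j := fun h => hpq (by simp [h])
  have hik : g i ≠ g k := fun h => hpr (by simp [h])
  have hjk : g j ≠ g k := fun h => hqr (by simp [h])
  have hprod : (g j - g i) * ((g k - g i) * (g k - g j)) = 0 := by linear_combination h0
  rcases mul_eq_zero.mp hprod with h | h
  · exact hij (by linarith)
  · rcases mul_eq_zero.mp h with h | h
    · exact hik (by linarith)
    · exact hjk (by linarith)

noncomputable def pf5 : Fin 5 → Pt := fun i => (((i : ℕ) : ℝ), ((i : ℕ) : ℝ)^2)
noncomputable def pf4 : Fin 4 → Pt := fun i => (((i : ℕ) : ℝ), ((i : ℕ) : ℝ)^2)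

lemma pf5_drawing : IsRectDrawing pf5 :=
  parabola_drawing _ (fun i j h => Fin.val_injective (Nat.cast_injective h))
lemma pf4_drawing : IsRectDrawing pf4 :=
  parabola_drawing _ (fun i j h => Fin.val_injective (Nat.cast_injective h))

lemma ncard_pair_le {α : Type*} (x y : α) : ({x, y} : Set α).ncard ≤ 2 := by
  refine le_trans (Set.ncard_insert_le _ _) ?_
  simp

lemma fv50 : ((0 : Fin 5) : ℕ) = 0 := rfl
lemma fv51 : ((1 : Fin 5) : ℕ) = 1 := rfl
lemma fv52 : ((2 : Fin 5) : ℕ) = 2 := rfl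
lemma fv53 : ((3 : Fin 5) : ℕ) = 3 := rfl
lemma fv54 : ((4 : Fin 5) : ℕ) = 4 := rfl
lemma fv40 : ((0 : Fin 4) : ℕ) = 0 := rfl
lemma fv41 : ((1 : Fin 4) : ℕ) = 1 := rfl
lemma fv42 : ((2 : Fin 4) : ℕ) = 2 := rfl
lemma fv43 : ((3 : Fin 4) : ℕ) = 3 := rfl

lemma ub5_01 : sepCount pf5 0 1 ≤ 0 := by
  refine sepCount_ub pf5 0 1 (∅ : Set (Finset (Fin 5)))
    (Set.toFinite _) (by simp) ?_
  intro a b hab hs ht hsep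
  fin_cases a <;> fin_cases b <;>
    first
      | (exfalso; revert hab hs ht; decide)
      | (exact absurd hsep (not_separates_of_same_sign (by norm_num [dd, pf5, fv50, fv51, fv52, fv53, fv54])))

lemma ub5_02 : sepCount pf5 0 2 ≤ 2 := by
  refine sepCount_ub pf5 0 2 ({({1,3} : Finset (Fin 5)), ({1,4} : Finset (Fin 5))} : Set (Finset (Fin 5)))
    (Set.toFinite _) (ncard_pair_le _ _) ?_
  intro a b hab hs ht hsep
  fin_cases a <;> fin_cases b <;>
    first
      | (exfalso; revert hab hs ht; decide)
      | (simp only [Set.mem_insert_iff, Set.mem_singleton_iff]; decide)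
      | (exact absurd hsep (not_separates_of_same_sign (by norm_num [dd, pf5, fv50, fv51, fv52, fv53, fv54])))

lemma ub5_03 : sepCount pf5 0 3 ≤ 2 := by
  refine sepCount_ub pf5 0 3 ({({1,4} : Finset (Fin 5)), ({2,4} : Finset (Fin 5))} : Set (Finset (Fin 5)))
    (Set.toFinite _) (ncard_pair_le _ _) ?_
  intro a b hab hs ht hsep
  fin_cases a <;> fin_cases b <;>
    first
      | (exfalso; revert hab hs ht; decide)
      | (simp only [Set.mem_insert_iff, Set.mem_singleton_iff]; decide)
      | (exact absurd hsep (not_separates_of_same_sign (by norm_num [dd, pf5, fv50, fv51, fv52, fv53, fv54])))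

lemma ub5_04 : sepCount pf5 0 4 ≤ 0 := by
  refine sepCount_ub pf5 0 4 (∅ : Set (Finset (Fin 5)))
    (Set.toFinite _) (by simp) ?_
  intro a b hab hs ht hsep
  fin_cases a <;> fin_cases b <;>
    first
      | (exfalso; revert hab hs ht; decide)
      | (exact absurd hsep (not_separates_of_same_sign (by norm_num [dd, pf5, fv50, fv51, fv52, fv53, fv54])))

lemma ub5_12 : sepCount pf5 1 2 ≤ 0 := by
  refine sepCount_ub pf5 1 2 (∅ : Set (Finset (Fin 5)))
    (Set.toFinite _) (by simp) ?_
  intro a b hab hs ht hsep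
  fin_cases a <;> fin_cases b <;>
    first
      | (exfalso; revert hab hs ht; decide)
      | (exact absurd hsep (not_separates_of_same_sign (by norm_num [dd, pf5, fv50, fv51, fv52, fv53, fv54])))

lemma ub5_23 : sepCount pf5 2 3 ≤ 0 := by
  refine sepCount_ub pf5 2 3 (∅ : Set (Finset (Fin 5)))
    (Set.toFinite _) (by simp) ?_
  intro a b hab hs ht hsep
  fin_cases a <;> fin_cases b <;>
    first
      | (exfalso; revert hab hs ht; decide)
      | (exact absurd hsep (not_separates_of_same_sign (by norm_num [dd, pf5, fv50, fv51, fv52, fv53, fv54])))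

lemma ub5_34 : sepCount pf5 3 4 ≤ 0 := by
  refine sepCount_ub pf5 3 4 (∅ : Set (Finset (Fin 5)))
    (Set.toFinite _) (by simp) ?_
  intro a b hab hs ht hsep
  fin_cases a <;> fin_cases b <;>
    first
      | (exfalso; revert hab hs ht; decide)
      | (exact absurd hsep (not_separates_of_same_sign (by norm_num [dd, pf5, fv50, fv51, fv52, fv53, fv54])))

lemma ub5_14 : sepCount pf5 1 4 ≤ 2 := by
  refine sepCount_ub pf5 1 4 ({({0,2} : Finset (Fin 5)), ({0,3} : Finset (Fin 5))} : Set (Finset (Fin 5)))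
    (Set.toFinite _) (ncard_pair_le _ _) ?_
  intro a b hab hs ht hsep
  fin_cases a <;> fin_cases b <;>
    first
      | (exfalso; revert hab hs ht; decide)
      | (simp only [Set.mem_insert_iff, Set.mem_singleton_iff]; decide)
      | (exact absurd hsep (not_separates_of_same_sign (by norm_num [dd, pf5, fv50, fv51, fv52, fv53, fv54])))

lemma ub4_01 : sepCount pf4 0 1 ≤ 0 := by
  refine sepCount_ub pf4 0 1 (∅ : Set (Finset (Fin 4)))
    (Set.toFinite _) (by simp) ?_
  intro a b hab hs ht hsep
  fin_cases a <;> fin_cases b <;>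
    first
      | (exfalso; revert hab hs ht; decide)
      | (exact absurd hsep (not_separates_of_same_sign (by norm_num [dd, pf4, fv40, fv41, fv42, fv43])))

lemma ub4_02 : sepCount pf4 0 2 ≤ 1 := by
  refine sepCount_ub pf4 0 2 ({({1,3} : Finset (Fin 4))} : Set (Finset (Fin 4)))
    (Set.toFinite _) (by simp) ?_
  intro a b hab hs ht hsep
  fin_cases a <;> fin_cases b <;>
    first
      | (exfalso; revert hab hs ht; decide)
      | (simp only [Set.mem_insert_iff, Set.mem_singleton_iff]; decide)
      | (exact absurd hsep (not_separates_of_same_sign (by norm_num [dd, pf4, fv40, fv41, fv42, fv43])))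

lemma ub4_03 : sepCount pf4 0 3 ≤ 0 := by
  refine sepCount_ub pf4 0 3 (∅ : Set (Finset (Fin 4)))
    (Set.toFinite _) (by simp) ?_
  intro a b hab hs ht hsep
  fin_cases a <;> fin_cases b <;>
    first
      | (exfalso; revert hab hs ht; decide)
      | (exact absurd hsep (not_separates_of_same_sign (by norm_num [dd, pf4, fv40, fv41, fv42, fv43])))

lemma ub4_12 : sepCount pf4 1 2 ≤ 0 := by
  refine sepCount_ub pf4 1 2 (∅ : Set (Finset (Fin 4)))
    (Set.toFinite _) (by simp) ?_
  intro a b hab hs ht hsep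
  fin_cases a <;> fin_cases b <;>
    first
      | (exfalso; revert hab hs ht; decide)
      | (exact absurd hsep (not_separates_of_same_sign (by norm_num [dd, pf4, fv40, fv41, fv42, fv43])))

lemma ub4_23 : sepCount pf4 2 3 ≤ 0 := by
  refine sepCount_ub pf4 2 3 (∅ : Set (Finset (Fin 4)))
    (Set.toFinite _) (by simp) ?_
  intro a b hab hs ht hsep
  fin_cases a <;> fin_cases b <;>
    first
      | (exfalso; revert hab hs ht; decide)
      | (exact absurd hsep (not_separates_of_same_sign (by norm_num [dd, pf4, fv40, fv41, fv42, fv43])))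

lemma ub4_13 : sepCount pf4 1 3 ≤ 1 := by
  refine sepCount_ub pf4 1 3 ({({0,2} : Finset (Fin 4))} : Set (Finset (Fin 4)))
    (Set.toFinite _) (by simp) ?_
  intro a b hab hs ht hsep
  fin_cases a <;> fin_cases b <;>
    first
      | (exfalso; revert hab hs ht; decide)
      | (simp only [Set.mem_insert_iff, Set.mem_singleton_iff]; decide)
      | (exact absurd hsep (not_separates_of_same_sign (by norm_num [dd, pf4, fv40, fv41, fv42, fv43])))

lemma w4_upper : drawingCrossings (wheelGraph 4) pf5 ≤ 6 := by
  rw [w4_crossings]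
  have := ub5_01; have := ub5_02; have := ub5_03; have := ub5_04
  have := ub5_12; have := ub5_23; have := ub5_34; have := ub5_14
  omega

lemma w3_upper : drawingCrossings (wheelGraph 3) pf4 ≤ 2 := by
  rw [w3_crossings]
  have := ub4_01; have := ub4_02; have := ub4_03
  have := ub4_12; have := ub4_23; have := ub4_13
  omega

lemma ocn3 : OCN (wheelGraph 3) = 2 := by
  apply le_antisymm
  · exact le_trans (Nat.sInf_le ⟨pf4, pf4_drawing, rfl⟩) w3_upper
  · refine le_csInf ⟨_, pf4, pf4_drawing, rfl⟩ ?_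
    rintro n ⟨f, hf, rfl⟩
    exact w3_lower f hf

lemma ocn4 : OCN (wheelGraph 4) = 6 := by
  apply le_antisymm
  · exact le_trans (Nat.sInf_le ⟨pf5, pf5_drawing, rfl⟩) w4_upper
  · refine le_csInf ⟨_, pf5, pf5_drawing, rfl⟩ ?_
    rintro n ⟨f, hf, rfl⟩
    exact w4_lower f hf

end OCNP

/-- `OCN(W_{3,1}) = 2` and `OCN(W_{4,1}) = 6`. -/
theorem stmt_16 : OCN (wheelGraph 3) = 2 ∧ OCN (wheelGraph 4) = 6 :=
  ⟨OCNP.ocn3, OCNP.ocn4⟩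
end

section
/- Let n ≥ 3 and consider the graph on n+1 vertices consisting of a cycle C_n on n of the vertices together with one isolated vertex. Any rectilinear drawing placing all n+1 points in convex position, with the cycle drawn along consecutive positions of the convex polygon, has crossing number n−2; in particular OCN(C_n ∪ {isolated vertex}) ≤ n−2, which is strictly less than the crossing number n of the drawing placing the n cycle vertices in convex position with the isolated vertex inside. -/
set_option linter.unusedSectionVars false

noncomputable section AuxOrchard

def ddet (p q r : Pt) : ℝ := (q.1-p.1)*(r.2-p.2) - (q.2-p.2)*(r.1-p.1)

lemma ddet_cyc (p q r : Pt) : ddet p q r = ddet q r p := by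
  simp only [ddet]; ring

lemma ddet_swap (p q r : Pt) : ddet p q r = - ddet p r q := by
  simp only [ddet]; ring

/-- Grassmann–Plücker relation. -/
lemma ddet_plucker (p b c s t : Pt) :
    ddet p b c * ddet p s t - ddet p b s * ddet p c t + ddet p b t * ddet p c s = 0 := by
  simp only [ddet]; ring

lemma ddet_affine (p q x y : Pt) (a b : ℝ) (hab : a + b = 1) :
    ddet p q (a • x + b • y) = a * ddet p q x + b * ddet p q y := by
  have hb : b = 1 - a := by linarith
  subst hb
  simp only [ddet, Prod.smul_fst, Prod.smul_snd, Prod.fst_add, Prod.snd_add, smul_eq_mul]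
  ring

lemma mem_line_iff {p q : Pt} (x : Pt) :
    x ∈ lineThrough p q ↔ ∃ r : ℝ, r • (q - p) = x - p := by
  have h : x = (x - p) +ᵥ p := by simp
  rw [lineThrough]
  constructor
  · intro hx
    rw [h] at hx
    rw [show affineSpan ℝ ({p, q} : Set Pt) = line[ℝ, p, q] from rfl] at hx
    exact (vadd_left_mem_affineSpan_pair).mp hx
  · rintro ⟨r, hr⟩
    have : (x - p) +ᵥ p ∈ line[ℝ, p, q] := (vadd_left_mem_affineSpan_pair).mpr ⟨r, by simpa using hr⟩
    simpa using this

lemma line_eq {p q : Pt} (hpq : p ≠ q) : lineThrough p q = {x | ddet p q x = 0} := by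
  ext x
  rw [mem_line_iff]
  constructor
  · rintro ⟨r, hr⟩
    have h1 : x.1 - p.1 = r * (q.1 - p.1) := by
      have := congrArg Prod.fst hr; simpa using this.symm
    have h2 : x.2 - p.2 = r * (q.2 - p.2) := by
      have := congrArg Prod.snd hr; simpa using this.symm
    simp only [Set.mem_setOf_eq, ddet]
    have e1 : x.1 = p.1 + r * (q.1 - p.1) := by linarith
    have e2 : x.2 = p.2 + r * (q.2 - p.2) := by linarith
    rw [e1, e2]; ring
  · intro hx
    simp only [Set.mem_setOf_eq, ddet] at hx
    by_cases h1 : q.1 - p.1 ≠ 0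
    · refine ⟨(x.1 - p.1) / (q.1 - p.1), ?_⟩
      have : x.2 - p.2 = (x.1 - p.1) * (q.2 - p.2) / (q.1 - p.1) := by
        field_simp; linarith
      ext
      · simp only [Prod.smul_fst, Prod.fst_sub, smul_eq_mul]
        field_simp
      · simp only [Prod.smul_snd, Prod.snd_sub, smul_eq_mul]
        rw [this]; ring
    · push_neg at h1
      have h2 : q.2 - p.2 ≠ 0 := by
        intro h2
        apply hpq
        have : q.1 = p.1 := by linarith
        have : q.2 = p.2 := by linarith
        ext <;> simp [*]
      refine ⟨(x.2 - p.2) / (q.2 - p.2), ?_⟩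
      have hx1 : x.1 - p.1 = 0 := by
        have : (q.2 - p.2) * (x.1 - p.1) = 0 := by rw [h1] at hx; linarith
        rcases mul_eq_zero.mp this with h | h
        · exact absurd h h2
        · exact h
      ext
      · simp only [Prod.smul_fst, Prod.fst_sub, smul_eq_mul]
        rw [h1, hx1]; ring
      · simp only [Prod.smul_snd, Prod.snd_sub, smul_eq_mul]
        field_simp

lemma collinear_of_ddet_eq_zero {p q r : Pt} (h : ddet p q r = 0) :
    Collinear ℝ ({p, q, r} : Set Pt) := by
  by_cases hpq : p = q
  · subst hpq
    have : ({p, p, r} : Set Pt) = {p, r} := by simp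
    rw [this]; exact collinear_pair ℝ p r
  · have hr : r ∈ lineThrough p q := by rw [line_eq hpq]; exact h
    have : Collinear ℝ ({r, p, q} : Set Pt) :=
      collinear_insert_of_mem_affineSpan_pair hr
    have hset : ({p, q, r} : Set Pt) = {r, p, q} := by
      ext z; simp [or_comm, or_assoc, or_left_comm]
    rw [hset]; exact this

lemma ddet_continuous (p q : Pt) : Continuous (fun x : Pt => ddet p q x) := by
  unfold ddet; fun_prop

lemma sep_iff {p q : Pt} (hpq : p ≠ q) (P Q : Pt) :
    Separates (lineThrough p q) P Q ↔ ddet p q P * ddet p q Q < 0 := by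
  set φ := fun x : Pt => ddet p q x with hφ
  have hL : lineThrough p q = {x | φ x = 0} := line_eq hpq
  have hconv : ∀ c : ℝ, Convex ℝ {x : Pt | c * φ x < 0} := by
    intro c
    intro x hx y hy a b ha hb hab
    simp only [Set.mem_setOf_eq] at *
    show c * ddet p q (a • x + b • y) < 0
    rw [ddet_affine p q x y a b hab]
    rcases ha.lt_or_eq with ha' | ha'
    · rcases hb.lt_or_eq with hb' | hb'
      · nlinarith [hx, hy, ha, hb]
      · rw [← hb']; simp only [zero_mul, add_zero]
        have : a = 1 := by linarith
        rw [this]; simpa using hx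
    · rw [← ha']; simp only [zero_mul, zero_add]
      have : b = 1 := by linarith
      rw [this]; simpa using hy
  constructor
  · rintro ⟨hP, hQ, hne⟩
    rw [hL] at hP hQ
    simp only [Set.mem_setOf_eq] at hP hQ
    -- hP : φ P ≠ 0, hQ : φ Q ≠ 0
    rcases lt_or_gt_of_ne (a := φ P * φ Q) (b := 0) (by
      intro h
      rcases mul_eq_zero.mp h with h | h
      · exact hP h
      · exact hQ h) with h | h
    · exact h
    · -- same sign : contradiction with hne
      exfalso
      apply hne
      -- both in the convex set {x | c * φ x < 0} with c = -sign
      have key : ∀ c : ℝ, c * φ P < 0 → c * φ Q < 0 →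
          connectedComponentIn (lineThrough p q)ᶜ P = connectedComponentIn (lineThrough p q)ᶜ Q := by
        intro c hcP hcQ
        have hsub : {x : Pt | c * φ x < 0} ⊆ (lineThrough p q)ᶜ := by
          intro x hx
          rw [hL]
          simp only [Set.mem_compl_iff, Set.mem_setOf_eq] at *
          intro h0; rw [h0] at hx; simp at hx
        have hpre : IsPreconnected {x : Pt | c * φ x < 0} := (hconv c).isPreconnected
        have h1 : {x : Pt | c * φ x < 0} ⊆ connectedComponentIn (lineThrough p q)ᶜ P :=
          hpre.subset_connectedComponentIn hcP hsub
        exact (connectedComponentIn_eq (h1 hcQ)).symm ▸ rfl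
      rcases mul_pos_iff.mp h with ⟨h1, h2⟩ | ⟨h1, h2⟩
      · exact key (-1) (by linarith) (by linarith)
      · exact key 1 (by linarith) (by linarith)
  · intro h
    have hP : φ P ≠ 0 := fun h0 => by simp only [hφ] at h0; rw [h0] at h; simp at h
    have hQ : φ Q ≠ 0 := fun h0 => by simp only [hφ] at h0; rw [h0] at h; simp at h
    refine ⟨by rw [hL]; exact hP, by rw [hL]; exact hQ, ?_⟩
    intro heq
    -- Q in component of P, use IVT
    set S := connectedComponentIn (lineThrough p q)ᶜ P with hS
    have hQS : Q ∈ S := by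
      rw [show S = connectedComponentIn (lineThrough p q)ᶜ Q from heq]
      exact mem_connectedComponentIn (by rw [hL]; exact hQ)
    have hPS : P ∈ S := mem_connectedComponentIn (by rw [hL]; exact hP)
    have hSsub : S ⊆ (lineThrough p q)ᶜ := connectedComponentIn_subset _ _
    have hpre : IsPreconnected S := isPreconnected_connectedComponentIn
    have himg : IsPreconnected (φ '' S) :=
      hpre.image φ (ddet_continuous p q).continuousOn
    have hoc := himg.ordConnected
    have h0 : (0 : ℝ) ∈ φ '' S := by
      rcases lt_or_gt_of_ne hP with hPneg | hPpos
      · have hQpos : 0 < φ Q := by nlinarith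
        exact hoc.out ⟨P, hPS, rfl⟩ ⟨Q, hQS, rfl⟩ ⟨le_of_lt hPneg, le_of_lt hQpos⟩
      · have hQneg : φ Q < 0 := by nlinarith
        exact hoc.out ⟨Q, hQS, rfl⟩ ⟨P, hPS, rfl⟩ ⟨le_of_lt hQneg, le_of_lt hPpos⟩
    rcases h0 with ⟨x, hxS, hx0⟩
    have : x ∈ lineThrough p q := by rw [hL]; exact hx0
    exact (hSsub hxS) this

/-- Master lemma: local convexity of consecutive edges forces all sorted triples to be
positively oriented. -/
lemma master (Q : ℕ → Pt) (ε : ℝ) (m : ℕ)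
    (H : ∀ i j, i+1 < m → j < m → j ≠ i → j ≠ i+1 → 0 < ε * ddet (Q i) (Q (i+1)) (Q j)) :
    ∀ c a b, a < b → b < c → c < m → 0 < ε * ddet (Q a) (Q b) (Q c) := by
  intro c
  induction c using Nat.strong_induction_on with
  | _ c IH =>
    intro a b hab hbc hcm
    rcases eq_or_lt_of_le (Nat.succ_le_of_lt hab) with hb | hb
    · -- b = a + 1
      subst hb
      exact H a c (by omega) (by omega) (by omega) (by omega)
    · rcases eq_or_lt_of_le (Nat.succ_le_of_lt hbc) with hc | hc
      · -- c = b + 1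
        have h := H b a (by omega) (by omega) (by omega) (by omega)
        have e : ddet (Q a) (Q b) (Q (b+1)) = ddet (Q b) (Q (b+1)) (Q a) := by
          simp only [ddet]; ring
        rw [← hc, e]
        exact h
      · -- a + 1 < b, b + 1 < c
        obtain ⟨c', rfl⟩ : ∃ c', c = c' + 1 := ⟨c - 1, by omega⟩
        have h1 : 0 < ε * ddet (Q a) (Q (a+1)) (Q c') :=
          H a c' (by omega) (by omega) (by omega) (by omega)
        have h2 : 0 < ε * ddet (Q a) (Q (a+1)) (Q b) :=
          H a b (by omega) (by omega) (by omega) (by omega)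
        have h3 : 0 < ε * ddet (Q c') (Q (c'+1)) (Q a) :=
          H c' a (by omega) (by omega) (by omega) (by omega)
        have h4 : 0 < ε * ddet (Q a) (Q b) (Q c') :=
          IH c' (by omega) a b hab (by omega) (by omega)
        have h5 : 0 < ε * ddet (Q a) (Q (a+1)) (Q (c'+1)) :=
          H a (c'+1) (by omega) (by omega) (by omega) (by omega)
        have key : (ε * ddet (Q a) (Q b) (Q (c'+1))) * (ε * ddet (Q a) (Q (a+1)) (Q c')) =
            (ε * ddet (Q a) (Q (a+1)) (Q b)) * (ε * ddet (Q c') (Q (c'+1)) (Q a)) +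
            (ε * ddet (Q a) (Q b) (Q c')) * (ε * ddet (Q a) (Q (a+1)) (Q (c'+1))) := by
          simp only [ddet]; ring
        nlinarith [mul_pos h2 h3, mul_pos h4 h5, h1, key]

section HullSign

lemma mod_succ_ne {m v : ℕ} (hm : 2 ≤ m) (hv : v < m) : (v + 1) % m ≠ v := by
  rcases Nat.lt_or_ge (v+1) m with h | h
  · rw [Nat.mod_eq_of_lt h]; omega
  · have : v + 1 = m := by omega
    rw [this, Nat.mod_self]; omega

lemma mod_two_ne {m v : ℕ} (hm : 3 ≤ m) (hv : v < m) : (v + 2) % m ≠ v := by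
  rcases Nat.lt_or_ge (v+2) m with h | h
  · rw [Nat.mod_eq_of_lt h]; omega
  · rcases Nat.lt_or_ge v (m-1) with h2 | h2
    · have : v + 2 = m := by omega
      rw [this, Nat.mod_self]; omega
    · have hv' : v = m - 1 := by omega
      have : v + 2 = m + 1 := by omega
      rw [this]
      have : (m + 1) % m = 1 := by
        rw [Nat.add_mod_left m 1, Nat.mod_eq_of_lt (by omega)]
      rw [this]; omega

lemma nextFin_ne {m : ℕ} (hm : 2 ≤ m) (i : Fin m) : nextFin i ≠ i := by
  have := mod_succ_ne hm i.isLt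
  intro h
  exact this (congrArg Fin.val h)

lemma nextFin_nextFin_val {m : ℕ} (i : Fin m) (hm : 0 < m) :
    (nextFin (nextFin i)).val = (i.val + 2) % m := by
  show ((i.val + 1) % m + 1) % m = (i.val + 2) % m
  conv_lhs => rw [Nat.mod_add_mod]

lemma nextFin_nextFin_ne {m : ℕ} (hm : 3 ≤ m) (i : Fin m) : nextFin (nextFin i) ≠ i := by
  intro h
  have h1 := congrArg Fin.val h
  rw [nextFin_nextFin_val i (by omega)] at h1
  exact mod_two_ne hm i.isLt h1

lemma nextFin_nextFin_ne' {m : ℕ} (hm : 3 ≤ m) (i : Fin m) : nextFin (nextFin i) ≠ nextFin i :=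
  nextFin_ne (by omega) (nextFin i)

lemma nextFin_mk {m v : ℕ} (h : v + 1 < m) :
    nextFin ⟨v, by omega⟩ = ⟨v + 1, h⟩ := by
  apply Fin.ext
  show (v + 1) % m = v + 1
  exact Nat.mod_eq_of_lt h

/-- From `HullCycle` plus nondegeneracy, extract a uniform orientation `ε`. -/
lemma hull_sign {m : ℕ} (hm : 3 ≤ m) (f : Fin m → Pt)
    (hinj : Function.Injective f)
    (hd : ∀ a b c : Fin m, a ≠ b → a ≠ c → b ≠ c → ddet (f a) (f b) (f c) ≠ 0)
    (hhull : HullCycle f) :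
    ∃ ε : ℝ, (ε = 1 ∨ ε = -1) ∧ ∀ i j : Fin m, j ≠ i → j ≠ nextFin i →
      0 < ε * ddet (f i) (f (nextFin i)) (f j) := by
  have hne : ∀ i : Fin m, i ≠ nextFin i := fun i => (nextFin_ne (by omega) i).symm
  -- same sign within an edge
  have same : ∀ i j l : Fin m, j ≠ i → j ≠ nextFin i → l ≠ i → l ≠ nextFin i →
      0 < ddet (f i) (f (nextFin i)) (f j) * ddet (f i) (f (nextFin i)) (f l) := by
    intro i j l hj1 hj2 hl1 hl2
    have hsep := hhull i j l hj1 hj2 hl1 hl2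
    rw [sep_iff (fun h => (hne i) (hinj h)) (f j) (f l)] at hsep
    push_neg at hsep
    have hj0 : ddet (f i) (f (nextFin i)) (f j) ≠ 0 :=
      hd i (nextFin i) j (hne i) (Ne.symm hj1) (Ne.symm hj2)
    have hl0 : ddet (f i) (f (nextFin i)) (f l) ≠ 0 :=
      hd i (nextFin i) l (hne i) (Ne.symm hl1) (Ne.symm hl2)
    rcases hsep.lt_or_eq with h | h
    · exact h
    · exact absurd (mul_eq_zero.mp h.symm) (by simp [hj0, hl0])
  set s : Fin m → ℝ := fun i => ddet (f i) (f (nextFin i)) (f (nextFin (nextFin i))) with hs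
  have hs0 : ∀ i, s i ≠ 0 := fun i =>
    hd i (nextFin i) (nextFin (nextFin i)) (hne i) (Ne.symm (nextFin_nextFin_ne hm i))
      (Ne.symm (nextFin_nextFin_ne' hm i))
  have sameS : ∀ i j : Fin m, j ≠ i → j ≠ nextFin i →
      0 < ddet (f i) (f (nextFin i)) (f j) * s i := by
    intro i j hj1 hj2
    exact same i j (nextFin (nextFin i)) hj1 hj2 (nextFin_nextFin_ne hm i)
      (nextFin_nextFin_ne' hm i)
  have step : ∀ i : Fin m, 0 < s i * s (nextFin i) := by
    intro i
    have h1 : 0 < ddet (f (nextFin i)) (f (nextFin (nextFin i))) (f i) * s (nextFin i) :=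
      sameS (nextFin i) i (Ne.symm (nextFin_ne (by omega) i))
        (Ne.symm (nextFin_nextFin_ne hm i))
    have e : ddet (f (nextFin i)) (f (nextFin (nextFin i))) (f i) = s i := by
      rw [hs]; simp only [ddet]; ring
    rw [e] at h1
    exact h1
  have hzlt : (0:ℕ) < m := by omega
  have chain : ∀ v : ℕ, ∀ hv : v < m, 0 < s ⟨0, hzlt⟩ * s ⟨v, hv⟩ := by
    intro v
    induction v with
    | zero =>
      intro hv
      have h0 := hs0 ⟨0, hzlt⟩
      have heq : (⟨0, hv⟩ : Fin m) = ⟨0, hzlt⟩ := rfl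
      rw [heq]
      exact mul_self_pos.mpr h0
    | succ v ih =>
      intro hv
      have hv' : v < m := by omega
      have h1 := ih hv'
      have h2 := step ⟨v, hv'⟩
      rw [nextFin_mk hv] at h2
      nlinarith [mul_pos h1 h2, mul_self_pos.mpr (hs0 ⟨v, hv'⟩)]
  have chain' : ∀ i : Fin m, 0 < s ⟨0, hzlt⟩ * s i := by
    intro i
    have := chain i.val i.isLt
    convert this using 3 <;> exact (Fin.ext rfl)
  refine ⟨if 0 < s ⟨0, hzlt⟩ then 1 else -1, by split <;> simp, ?_⟩
  intro i j hj1 hj2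
  have h1 := sameS i j hj1 hj2
  have h2 := chain' i
  split
  · rename_i h
    nlinarith
  · rename_i h
    have h' : s ⟨0, hzlt⟩ < 0 := (hs0 _).lt_of_le (not_lt.mp h)
    nlinarith

end HullSign

section MasterFin

lemma lineThrough_comm (p q : Pt) : lineThrough p q = lineThrough q p := by
  unfold lineThrough; rw [Set.pair_comm]

lemma master_fin {m : ℕ} (hm : 3 ≤ m) (f : Fin m → Pt) (ε : ℝ)
    (hH : ∀ i j : Fin m, j ≠ i → j ≠ nextFin i → 0 < ε * ddet (f i) (f (nextFin i)) (f j)) :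
    ∀ a b c : Fin m, a < b → b < c → 0 < ε * ddet (f a) (f b) (f c) := by
  have hm0 : 0 < m := by omega
  set Q : ℕ → Pt := fun v => if h : v < m then f ⟨v, h⟩ else f ⟨0, hm0⟩ with hQ
  have H : ∀ i j, i+1 < m → j < m → j ≠ i → j ≠ i+1 →
      0 < ε * ddet (Q i) (Q (i+1)) (Q j) := by
    intro i j hi hj hji hji1
    have e1 : Q i = f ⟨i, by omega⟩ := by simp [hQ, Nat.lt_of_succ_lt hi]
    have e2 : Q (i+1) = f ⟨i+1, hi⟩ := by simp [hQ, hi]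
    have e3 : Q j = f ⟨j, hj⟩ := by simp [hQ, hj]
    rw [e1, e2, e3, ← nextFin_mk hi]
    exact hH ⟨i, by omega⟩ ⟨j, hj⟩ (fun h => hji (congrArg Fin.val h))
      (by rw [nextFin_mk hi]; exact fun h => hji1 (congrArg Fin.val h))
  intro a b c hab hbc
  have := master Q ε m H c.val a.val b.val hab hbc c.isLt
  have ea : Q a.val = f a := by simp [hQ, a.isLt]
  have eb : Q b.val = f b := by simp [hQ, b.isLt]
  have ec : Q c.val = f c := by simp [hQ, c.isLt]
  rwa [ea, eb, ec] at this

variable {m : ℕ} (f : Fin m → Pt) (ε : ℝ)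

/-- `x` outside the interval `(a,b)`: positive side. -/
lemma side_pos (horder : ∀ a b c : Fin m, a < b → b < c → 0 < ε * ddet (f a) (f b) (f c))
    {a b x : Fin m} (hab : a < b) (hx : x < a ∨ b < x) :
    0 < ε * ddet (f a) (f b) (f x) := by
  rcases hx with hx | hx
  · have := horder x a b hx hab
    have e : ddet (f a) (f b) (f x) = ddet (f x) (f a) (f b) := by
      simp only [ddet]; ring
    rwa [e]
  · exact horder a b x hab hx

/-- `x` inside the interval `(a,b)`: negative side. -/
lemma side_neg (horder : ∀ a b c : Fin m, a < b → b < c → 0 < ε * ddet (f a) (f b) (f c))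
    {a b x : Fin m} (hax : a < x) (hxb : x < b) :
    ε * ddet (f a) (f b) (f x) < 0 := by
  have := horder a x b hax hxb
  have e : ddet (f a) (f b) (f x) = - ddet (f a) (f x) (f b) := by
    simp only [ddet]; ring
  rw [e]; linarith [this]

lemma mul_sign_transfer {ε X Y : ℝ} (hε : ε = 1 ∨ ε = -1) :
    X * Y = (ε * X) * (ε * Y) := by
  rcases hε with h | h <;> rw [h] <;> ring

end MasterFin

section EdgeSum

lemma edgeSet_cycle (n : ℕ) (hn : 3 ≤ n) :
    (cycleWithIsolated n).edgeSet = {e | ∃ i : Fin n, e = s(i.succ, (nextFin i).succ)} := by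
  unfold cycleWithIsolated
  rw [SimpleGraph.edgeSet_fromEdgeSet]
  ext e
  simp only [Set.mem_diff, Set.mem_setOf_eq]
  constructor
  · rintro ⟨h, _⟩; exact h
  · rintro ⟨i, rfl⟩
    refine ⟨⟨i, rfl⟩, ?_⟩
    simp only [Sym2.mem_diagSet, Sym2.isDiag_iff_proj_eq]
    intro h
    have : i = nextFin i := Fin.succ_injective _ h
    exact (nextFin_ne (by omega) i) this.symm

lemma drawingCrossings_cycle (n : ℕ) (hn : 3 ≤ n) (f : Fin (n + 1) → Pt) :
    drawingCrossings (cycleWithIsolated n) f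
      = ∑ i : Fin n, sepCount f i.succ ((nextFin i).succ) := by
  unfold drawingCrossings
  have hset : (cycleWithIsolated n).edgeSet.toFinite.toFinset
      = Finset.image (fun i : Fin n => s(i.succ, (nextFin i).succ)) Finset.univ := by
    ext e
    simp only [Set.Finite.mem_toFinset, Finset.mem_image, Finset.mem_univ, true_and,
      edgeSet_cycle n hn]
    constructor
    · rintro ⟨i, rfl⟩; exact ⟨i, rfl⟩
    · rintro ⟨i, rfl⟩; exact ⟨i, rfl⟩
  rw [hset, Finset.sum_image ?inj]
  case inj =>
    intro i _ j _ hij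
    rw [Sym2.eq_iff] at hij
    rcases hij with ⟨h1, _⟩ | ⟨h1, h2⟩
    · exact Fin.succ_injective _ h1
    · exfalso
      have e1 : i = nextFin j := Fin.succ_injective _ h1
      have e2 : nextFin i = j := Fin.succ_injective _ h2
      rw [e1] at e2
      exact (nextFin_nextFin_ne hn j) e2
  rfl

end EdgeSum

section NoSep

variable {m : ℕ} {f : Fin m → Pt} {ε : ℝ}

lemma nosep_out (hε : ε = 1 ∨ ε = -1)
    (horder : ∀ a b c : Fin m, a < b → b < c → 0 < ε * ddet (f a) (f b) (f c))
    {a b x y : Fin m} (hfab : f a ≠ f b) (hab : a < b)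
    (hx : x < a ∨ b < x) (hy : y < a ∨ b < y) :
    ¬ Separates (lineThrough (f a) (f b)) (f x) (f y) := by
  rw [sep_iff hfab]
  have hX := side_pos f ε horder hab hx
  have hY := side_pos f ε horder hab hy
  rw [mul_sign_transfer (X := ddet (f a) (f b) (f x)) (Y := ddet (f a) (f b) (f y)) hε]
  push_neg
  positivity

lemma nosep_in (hε : ε = 1 ∨ ε = -1)
    (horder : ∀ a b c : Fin m, a < b → b < c → 0 < ε * ddet (f a) (f b) (f c))
    {a b x y : Fin m} (hfab : f a ≠ f b) (hab : a < b)
    (hx : a < x ∧ x < b) (hy : a < y ∧ y < b) :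
    ¬ Separates (lineThrough (f a) (f b)) (f x) (f y) := by
  rw [sep_iff hfab]
  have hX := side_neg f ε horder hx.1 hx.2
  have hY := side_neg f ε horder hy.1 hy.2
  rw [mul_sign_transfer (X := ddet (f a) (f b) (f x)) (Y := ddet (f a) (f b) (f y)) hε]
  push_neg
  nlinarith

lemma sep_mix (hε : ε = 1 ∨ ε = -1)
    (horder : ∀ a b c : Fin m, a < b → b < c → 0 < ε * ddet (f a) (f b) (f c))
    {a b x y : Fin m} (hfab : f a ≠ f b) (hab : a < b)
    (hx : x < a ∨ b < x) (hy : a < y ∧ y < b) :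
    Separates (lineThrough (f a) (f b)) (f x) (f y) := by
  rw [sep_iff hfab]
  have hX := side_pos f ε horder hab hx
  have hY := side_neg f ε horder hy.1 hy.2
  rw [mul_sign_transfer (X := ddet (f a) (f b) (f x)) (Y := ddet (f a) (f b) (f y)) hε]
  exact mul_neg_of_pos_of_neg hX hY

end NoSep

section PartI

lemma part_i {n : ℕ} (hn : 3 ≤ n) (f : Fin (n + 1) → Pt) (hf : IsRectDrawing f)
    (hhull : HullCycle f) :
    drawingCrossings (cycleWithIsolated n) f = n - 2 := by
  have hinj : Function.Injective f := hf.1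
  have hgen := hf.2.2
  have hd : ∀ a b c : Fin (n+1), a ≠ b → a ≠ c → b ≠ c → ddet (f a) (f b) (f c) ≠ 0 := by
    intro a b c hab hac hbc h0
    exact hgen (f a) ⟨a, rfl⟩ (f b) ⟨b, rfl⟩ (f c) ⟨c, rfl⟩ (fun h => hab (hinj h))
      (fun h => hac (hinj h)) (fun h => hbc (hinj h)) (collinear_of_ddet_eq_zero h0)
  obtain ⟨ε, hε, hH⟩ := hull_sign (show 3 ≤ n + 1 by omega) f hinj hd hhull
  have horder := master_fin (show 3 ≤ n + 1 by omega) f ε hH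
  rw [drawingCrossings_cycle n hn f]
  have hlast : n - 1 < n := by omega
  rw [Finset.sum_eq_single (⟨n - 1, hlast⟩ : Fin n)]
  · -- value at the last edge is n - 2
    set s : Fin (n+1) := (⟨n - 1, hlast⟩ : Fin n).succ with hs
    set t : Fin (n+1) := (nextFin (⟨n - 1, hlast⟩ : Fin n)).succ with ht
    have hsv : s.val = n := by simp [hs, Fin.val_succ]; omega
    have htv : t.val = 1 := by
      simp only [ht, Fin.val_succ]
      have : (nextFin (⟨n - 1, hlast⟩ : Fin n)).val = 0 := by
        show (n - 1 + 1) % n = 0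
        have : n - 1 + 1 = n := by omega
        rw [this, Nat.mod_self]
      rw [this]
    unfold sepCount
    have hzval : ((0 : Fin (n+1))).val = 0 := rfl
    have hsetEq : {e : Finset (Fin (n+1)) | ∃ a b : Fin (n+1), e = {a, b} ∧ a ≠ b ∧ s ∉ e ∧ t ∉ e ∧
        Separates (lineThrough (f a) (f b)) (f s) (f t)}
        = ↑(Finset.image (fun b : Fin (n+1) => ({0, b} : Finset (Fin (n+1))))
            (Finset.filter (fun b : Fin (n+1) => 2 ≤ b.val ∧ b.val ≤ n - 1) Finset.univ)) := by
      ext e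
      simp only [Set.mem_setOf_eq, Finset.coe_image, Set.mem_image, Finset.mem_coe,
        Finset.mem_filter, Finset.mem_univ, true_and]
      constructor
      · rintro ⟨a, b, rfl, hab, hse, hte, hsep⟩
        simp only [Finset.mem_insert, Finset.mem_singleton, not_or] at hse hte
        obtain ⟨hsa, hsb⟩ := hse
        obtain ⟨hta, htb⟩ := hte
        have hsa' : s.val ≠ a.val := fun h => hsa (Fin.ext h)
        have hsb' : s.val ≠ b.val := fun h => hsb (Fin.ext h)
        have hta' : t.val ≠ a.val := fun h => hta (Fin.ext h)
        have htb' : t.val ≠ b.val := fun h => htb (Fin.ext h)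
        have hav : a.val < n + 1 := a.isLt
        have hbv : b.val < n + 1 := b.isLt
        -- show one of a,b is the vertex 0, the other has value in [2, n-1]
        have key : ∀ c d : Fin (n+1), c < d → ({c, d} : Finset (Fin (n+1))) = {a, b} →
            Separates (lineThrough (f c) (f d)) (f s) (f t) →
            c.val ≠ s.val → d.val ≠ s.val → c.val ≠ t.val → d.val ≠ t.val →
            ∃ x : Fin (n+1), (2 ≤ x.val ∧ x.val ≤ n - 1) ∧ ({0, x} : Finset (Fin (n+1))) = {a, b} := by
          intro c d hcd hcdab hsep' hcs hds hct hdt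
          by_cases hc0 : c.val = 0
          · -- c = 0; then d must be in [2, n-1]
            refine ⟨d, ⟨?_, ?_⟩, ?_⟩
            · have : c < d := hcd
              rw [Fin.lt_def, hc0] at this
              omega
            · omega
            · have : c = 0 := Fin.ext hc0
              rw [← this]; exact hcdab
          · -- 2 ≤ c < d ≤ n-1 : both s,t outside : no separation, contradiction
            exfalso
            have hcv : 2 ≤ c.val := by omega
            have hdv : d.val ≤ n - 1 := by omega
            have hfcd : f c ≠ f d := fun h => (Fin.lt_def.mp hcd).ne (congrArg Fin.val (hinj h))
            exact nosep_out hε horder hfcd hcd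
              (Or.inr (Fin.lt_def.mpr (by omega))) (Or.inl (Fin.lt_def.mpr (by omega))) hsep'
        rcases Fin.lt_or_lt_of_ne hab with h | h
        · obtain ⟨x, hx1, hx2⟩ := key a b h rfl hsep (Ne.symm hsa') (Ne.symm hsb')
            (Ne.symm hta') (Ne.symm htb')
          exact ⟨x, hx1, hx2.symm ▸ hx2⟩
        · obtain ⟨x, hx1, hx2⟩ := key b a h (by rw [Finset.pair_comm])
            (by rw [lineThrough_comm]; exact hsep) (Ne.symm hsb') (Ne.symm hsa')
            (Ne.symm htb') (Ne.symm hta')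
          exact ⟨x, hx1, hx2⟩
      · rintro ⟨x, ⟨hx1, hx2⟩, rfl⟩
        have hx0 : (0 : Fin (n+1)) ≠ x := by
          intro h
          have := congrArg Fin.val h
          rw [hzval] at this
          omega
        refine ⟨0, x, rfl, hx0, ?_, ?_, ?_⟩
        · simp only [Finset.mem_insert, Finset.mem_singleton, not_or]
          constructor
          · intro h; have := congrArg Fin.val h; omega
          · intro h; have := congrArg Fin.val h; omega
        · simp only [Finset.mem_insert, Finset.mem_singleton, not_or]
          constructor
          · intro h; have := congrArg Fin.val h; omega
          · intro h; have := congrArg Fin.val h; omega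
        · have hf0x : f 0 ≠ f x := fun h => hx0 (hinj h)
          have h0x : (0 : Fin (n+1)) < x := Fin.lt_def.mpr (by omega)
          exact sep_mix hε horder hf0x h0x
            (Or.inr (Fin.lt_def.mpr (by omega)))
            ⟨Fin.lt_def.mpr (by omega), Fin.lt_def.mpr (by omega)⟩
    rw [hsetEq, Set.ncard_coe_finset]
    rw [Finset.card_image_of_injOn]
    · -- card of the filter is n - 2
      rw [Finset.card_bij' (fun (b : Fin (n+1)) _ => b.val)
        (fun (v : ℕ) (hv : v ∈ Finset.Icc 2 (n-1)) => (⟨v, by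
          simp only [Finset.mem_Icc] at hv; omega⟩ : Fin (n+1)))
        (fun b hb => by simp only [Finset.mem_filter] at hb; simp [Finset.mem_Icc]; omega)
        (fun v hv => by simp only [Finset.mem_Icc] at hv; simp [Finset.mem_filter]; omega)
        (fun b hb => rfl) (fun v hv => rfl)]
      rw [Nat.card_Icc]; omega
    · intro b hb b' hb' hbb'
      simp only [Finset.coe_filter, Set.mem_setOf_eq] at hb hb'
      have hbb'' : ({0, b} : Finset (Fin (n+1))) = {0, b'} := hbb'
      have : b ∈ ({0, b'} : Finset (Fin (n+1))) := by rw [← hbb'']; simp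
      simp only [Finset.mem_insert, Finset.mem_singleton] at this
      rcases this with h | h
      · exfalso; have := congrArg Fin.val h; omega
      · exact h
  · -- other edges contribute 0
    intro i _ hine
    have hiv : i.val < n - 1 := by
      rcases Nat.lt_or_ge i.val (n-1) with h | h
      · exact h
      · exfalso
        have hieq : i.val = n - 1 := by omega
        exact hine (Fin.ext (by rw [hieq]))
    set s : Fin (n+1) := i.succ with hs
    set t : Fin (n+1) := (nextFin i).succ with ht
    have hsv : s.val = i.val + 1 := rfl
    have htv : t.val = i.val + 2 := by
      show (i.val + 1) % n + 1 = i.val + 2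
      rw [Nat.mod_eq_of_lt (by omega)]
    unfold sepCount
    rw [show {e : Finset (Fin (n+1)) | ∃ a b : Fin (n+1), e = {a, b} ∧ a ≠ b ∧ s ∉ e ∧ t ∉ e ∧
        Separates (lineThrough (f a) (f b)) (f s) (f t)} = (∅ : Set (Finset (Fin (n+1)))) from ?_]
    · exact Set.ncard_empty _
    ext e
    simp only [Set.mem_setOf_eq, Set.mem_empty_iff_false, iff_false, not_exists]
    intro a b
    rintro ⟨rfl, hab, hse, hte, hsep⟩
    simp only [Finset.mem_insert, Finset.mem_singleton, not_or] at hse hte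
    obtain ⟨hsa, hsb⟩ := hse
    obtain ⟨hta, htb⟩ := hte
    have hsa' : s.val ≠ a.val := fun h => hsa (Fin.ext h)
    have hsb' : s.val ≠ b.val := fun h => hsb (Fin.ext h)
    have hta' : t.val ≠ a.val := fun h => hta (Fin.ext h)
    have htb' : t.val ≠ b.val := fun h => htb (Fin.ext h)
    have core : ∀ c d : Fin (n+1), c < d →
        c.val ≠ s.val → d.val ≠ s.val → c.val ≠ t.val → d.val ≠ t.val →
        ¬ Separates (lineThrough (f c) (f d)) (f s) (f t) := by
      intro c d hcd hcs hds hct hdt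
      have hfcd : f c ≠ f d := fun h => (Fin.lt_def.mp hcd).ne (congrArg Fin.val (hinj h))
      have hcdv : c.val < d.val := Fin.lt_def.mp hcd
      rcases show (s.val < c.val ∧ t.val < c.val) ∨ (d.val < s.val ∧ d.val < t.val) ∨
          (c.val < s.val ∧ s.val < d.val ∧ c.val < t.val ∧ t.val < d.val) by omega with
        ⟨h1, h2⟩ | ⟨h1, h2⟩ | ⟨h1, h2, h3, h4⟩
      · exact nosep_out hε horder hfcd hcd (Or.inl (Fin.lt_def.mpr h1))
          (Or.inl (Fin.lt_def.mpr h2))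
      · exact nosep_out hε horder hfcd hcd (Or.inr (Fin.lt_def.mpr h1))
          (Or.inr (Fin.lt_def.mpr h2))
      · exact nosep_in hε horder hfcd hcd ⟨Fin.lt_def.mpr h1, Fin.lt_def.mpr h2⟩
          ⟨Fin.lt_def.mpr h3, Fin.lt_def.mpr h4⟩
    rcases Fin.lt_or_lt_of_ne hab with h | h
    · exact core a b h (Ne.symm hsa') (Ne.symm hsb') (Ne.symm hta') (Ne.symm htb') hsep
    · exact core b a h (Ne.symm hsb') (Ne.symm hsa') (Ne.symm htb') (Ne.symm hta')
        (by rw [lineThrough_comm]; exact hsep)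
  · intro h
    exact absurd (Finset.mem_univ _) h

end PartI

section Parabola

def para (k : ℕ) : Pt := ((k : ℝ), (k : ℝ)^2)

lemma ddet_para (a b c : ℕ) :
    ddet (para a) (para b) (para c) = ((b:ℝ) - a) * ((c:ℝ) - a) * ((c:ℝ) - b) := by
  simp only [ddet, para]; ring

lemma para_inj : Function.Injective para := by
  intro a b h
  have := congrArg Prod.fst h
  simp only [para] at this
  exact_mod_cast this

lemma ddet_para_ne {a b c : ℕ} (hab : a ≠ b) (hac : a ≠ c) (hbc : b ≠ c) :
    ddet (para a) (para b) (para c) ≠ 0 := by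
  rw [ddet_para]
  have h1 : (b:ℝ) - a ≠ 0 := by
    intro h; exact hab (by exact_mod_cast (by linarith : (a:ℝ) = b))
  have h2 : (c:ℝ) - a ≠ 0 := by
    intro h; exact hac (by exact_mod_cast (by linarith : (a:ℝ) = c))
  have h3 : (c:ℝ) - b ≠ 0 := by
    intro h; exact hbc (by exact_mod_cast (by linarith : (b:ℝ) = c))
  positivity

lemma factor_pos {i j : ℕ} (h1 : j ≠ i) (h2 : j ≠ i + 1) :
    0 < ((j:ℝ) - i) * ((j:ℝ) - i - 1) := by
  rcases show j < i ∨ i + 1 < j by omega with h | h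
  · have : (j:ℝ) < i := by exact_mod_cast h
    nlinarith
  · have : (i:ℝ) + 1 < j := by exact_mod_cast h
    nlinarith

/-- The parabola drawing of `Fin m`. -/
def paraF (m : ℕ) : Fin m → Pt := fun i => para i.val

lemma paraF_inj (m : ℕ) : Function.Injective (paraF m) := by
  intro a b h
  exact Fin.ext (para_inj h)

lemma ddet_eq_zero_of_collinear {p q r : Pt} (hpq : p ≠ q)
    (h : Collinear ℝ ({p, q, r} : Set Pt)) : ddet p q r = 0 := by
  have hr : r ∈ lineThrough p q :=
    h.mem_affineSpan_of_mem_of_ne (by simp) (by simp) (by simp) hpq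
  rw [line_eq hpq] at hr
  exact hr

lemma paraF_rect (m : ℕ) : IsRectDrawing (paraF m) := by
  refine ⟨paraF_inj m, Set.finite_range _, ?_⟩
  rintro p ⟨a, rfl⟩ q ⟨b, rfl⟩ r ⟨c, rfl⟩ hpq hpr hqr hcol
  have hab : a.val ≠ b.val := fun h => hpq (congrArg (paraF m) (Fin.ext h))
  have hac : a.val ≠ c.val := fun h => hpr (congrArg (paraF m) (Fin.ext h))
  have hbc : b.val ≠ c.val := fun h => hqr (congrArg (paraF m) (Fin.ext h))
  exact ddet_para_ne hab hac hbc (ddet_eq_zero_of_collinear hpq hcol)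

lemma paraF_hull {m : ℕ} (hm : 3 ≤ m) : HullCycle (paraF m) := by
  intro i j l hj1 hj2 hl1 hl2
  have hne : (paraF m) i ≠ (paraF m) (nextFin i) :=
    fun h => (nextFin_ne (by omega) i) ((paraF_inj m h).symm)
  rw [sep_iff hne]
  push_neg
  have hval : ∀ x : Fin m, x ≠ i → x ≠ nextFin i →
      0 < ddet (paraF m i) (paraF m (nextFin i)) (paraF m x) := by
    intro x hx1 hx2
    have hx1' : x.val ≠ i.val := fun h => hx1 (Fin.ext h)
    have hx2' : x.val ≠ (nextFin i).val := fun h => hx2 (Fin.ext h)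
    rcases Nat.lt_or_ge (i.val + 1) m with hlt | hge
    · have hni : (nextFin i).val = i.val + 1 := Nat.mod_eq_of_lt hlt
      show 0 < ddet (para i.val) (para (nextFin i).val) (para x.val)
      rw [hni, ddet_para]
      push_cast
      have := factor_pos (i := i.val) (j := x.val) hx1' (by rw [hni] at hx2'; omega)
      nlinarith
    · have hieq : i.val = m - 1 := by have := i.isLt; omega
      have hni : (nextFin i).val = 0 := by
        show (i.val + 1) % m = 0
        rw [show i.val + 1 = m by omega, Nat.mod_self]
      show 0 < ddet (para i.val) (para (nextFin i).val) (para x.val)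
      rw [hni, ddet_para]
      have hx0 : 0 < x.val := by omega
      have hxm : x.val < m - 1 := by
        have := x.isLt; omega
      have c1 : (0:ℝ) < x.val := by exact_mod_cast hx0
      have c2 : (x.val : ℝ) < i.val := by
        rw [hieq]; exact_mod_cast (by omega : x.val < m - 1)
      have c3 : (0:ℝ) < (i.val:ℝ) := by
        rw [hieq]; exact_mod_cast (show 0 < m - 1 by omega)
      push_cast
      nlinarith [mul_pos (mul_pos c3 c1) (sub_pos.mpr c2)]
  exact le_of_lt (mul_pos (hval j hj1 hj2) (hval l hl1 hl2))

end Parabola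

section PartIVTools

/-- A nonvanishing finite sequence with some sign change and no alternation has a
unique consecutive sign change. -/
lemma sign_changes_unique (N : ℕ) (t : ℕ → ℝ)
    (h0 : ∀ d, 1 ≤ d → d ≤ N → t d ≠ 0)
    (hex : ∃ d1 d2, 1 ≤ d1 ∧ d1 < d2 ∧ d2 ≤ N ∧ t d1 * t d2 < 0)
    (hno : ∀ d1 d2 d3, 1 ≤ d1 → d1 < d2 → d2 < d3 → d3 ≤ N →
        ¬(t d1 * t d2 < 0 ∧ t d2 * t d3 < 0)) :
    ∃! d, 1 ≤ d ∧ d < N ∧ t d * t (d+1) < 0 := by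
  obtain ⟨d1, d2, hd1, hd12, hd2, hprod⟩ := hex
  have exist : ∀ m d1 d2, d2 - d1 ≤ m → 1 ≤ d1 → d1 < d2 → d2 ≤ N → t d1 * t d2 < 0 →
      ∃ d, 1 ≤ d ∧ d < N ∧ t d * t (d+1) < 0 := by
    intro m
    induction m with
    | zero => intro d1 d2 hm h1 h12 h2 _; omega
    | succ m ih =>
      intro d1 d2 hm h1 h12 h2 hprod
      rcases eq_or_lt_of_le (Nat.succ_le_of_lt h12) with he | hlt
      · exact ⟨d1, h1, by omega, by rw [show d2 = d1 + 1 by omega] at hprod; exact hprod⟩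
      · rcases lt_or_ge (t d1 * t (d1+1)) 0 with hc | hc
        · exact ⟨d1, h1, by omega, hc⟩
        · have hne1 : t d1 ≠ 0 := h0 d1 h1 (by omega)
          have hne2 : t (d1+1) ≠ 0 := h0 (d1+1) (by omega) (by omega)
          have hpos : 0 < t d1 * t (d1+1) :=
            (mul_ne_zero hne1 hne2).lt_of_le' hc
          have : t (d1+1) * t d2 < 0 := by nlinarith [mul_self_pos.mpr hne1]
          exact ih (d1+1) d2 (by omega) (by omega) hlt h2 this
  obtain ⟨d, hd⟩ := exist (d2 - d1) d1 d2 le_rfl hd1 hd12 hd2 hprod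
  refine ⟨d, hd, ?_⟩
  intro d' hd'
  by_contra hne
  have uniq : ∀ a b, 1 ≤ a → a < N → b < N → a < b →
      t a * t (a+1) < 0 → t b * t (b+1) < 0 → False := by
    intro a b ha haN hbN hab hca hcb
    rcases eq_or_lt_of_le (Nat.succ_le_of_lt hab) with he | hlt
    · refine hno a (a+1) (a+2) ha (by omega) (by omega) (by omega) ⟨hca, ?_⟩
      have hb : b = a + 1 := by omega
      subst hb
      exact hcb
    · have hnb : t (a+1) ≠ 0 := h0 (a+1) (by omega) (by omega)
      rcases lt_or_ge (t (a+1) * t b) 0 with hc | hc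
      · exact hno a (a+1) b ha (by omega) (by omega) (by omega) ⟨hca, hc⟩
      · have hb0 : t b ≠ 0 := h0 b (by omega) (by omega)
        have hpos : 0 < t (a+1) * t b := (mul_ne_zero hnb hb0).lt_of_le' hc
        have hab' : t a * t b < 0 := by nlinarith [mul_self_pos.mpr hnb]
        exact hno a b (b+1) ha (by omega) (by omega) (by omega) ⟨hab', hcb⟩
  rcases Nat.lt_trichotomy d d' with h | h | h
  · exact uniq d d' hd.1 hd.2.1 hd'.2.1 h hd.2.2 hd'.2.2
  · exact hne (h.symm ▸ rfl)
  · exact uniq d' d hd'.1 hd'.2.1 hd.2.1 h hd'.2.2 hd.2.2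

variable {n : ℕ}

/-- relative cyclic index -/
def cidx (hn : 0 < n) (k : Fin n) (d : ℕ) : Fin n := ⟨(k.val + d) % n, Nat.mod_lt _ hn⟩

lemma cidx_val (hn : 0 < n) (k : Fin n) (d : ℕ) : (cidx hn k d).val = (k.val + d) % n := rfl

lemma cidx_spec (hn : 0 < n) (k : Fin n) {d : ℕ} (h1 : 1 ≤ d) (h2 : d < n) :
    ((k.val + d < n ∧ (cidx hn k d).val = k.val + d) ∨
     (n ≤ k.val + d ∧ (cidx hn k d).val = k.val + d - n)) := by
  rcases lt_or_ge (k.val + d) n with h | h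
  · exact Or.inl ⟨h, by rw [cidx_val, Nat.mod_eq_of_lt h]⟩
  · refine Or.inr ⟨h, ?_⟩
    rw [cidx_val, Nat.mod_eq_sub_mod h, Nat.mod_eq_of_lt (by have := k.isLt; omega)]

lemma cidx_ne (hn : 0 < n) (k : Fin n) {d : ℕ} (h1 : 1 ≤ d) (h2 : d < n) :
    cidx hn k d ≠ k := by
  intro h
  have hv := congrArg Fin.val h
  rcases cidx_spec hn k h1 h2 with ⟨h3, h4⟩ | ⟨h3, h4⟩ <;> rw [h4] at hv <;> omega

lemma cidx_nextFin (hn : 0 < n) (k : Fin n) (d : ℕ) :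
    nextFin (cidx hn k d) = cidx hn k (d + 1) := by
  apply Fin.ext
  show ((k.val + d) % n + 1) % n = (k.val + (d+1)) % n
  conv_lhs => rw [Nat.mod_add_mod]
  rw [Nat.add_assoc]

lemma cidx_inj (hn : 0 < n) (k : Fin n) {d d' : ℕ} (h1 : d < n) (h2 : d' < n)
    (h : cidx hn k d = cidx hn k d') : d = d' := by
  have hv := congrArg Fin.val h
  rw [cidx_val, cidx_val] at hv
  have h3 := Nat.mod_lt (k.val + d) hn
  rcases lt_or_ge (k.val + d) n with ha | ha <;> rcases lt_or_ge (k.val + d') n with hb | hb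
  · rw [Nat.mod_eq_of_lt ha, Nat.mod_eq_of_lt hb] at hv; omega
  · rw [Nat.mod_eq_of_lt ha, Nat.mod_eq_sub_mod hb,
      Nat.mod_eq_of_lt (by have := k.isLt; omega)] at hv
    have := k.isLt; omega
  · rw [Nat.mod_eq_sub_mod ha, Nat.mod_eq_of_lt (by have := k.isLt; omega),
      Nat.mod_eq_of_lt hb] at hv
    have := k.isLt; omega
  · rw [Nat.mod_eq_sub_mod ha, Nat.mod_eq_of_lt (by have := k.isLt; omega),
      Nat.mod_eq_sub_mod hb, Nat.mod_eq_of_lt (by have := k.isLt; omega)] at hv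
    have := k.isLt; omega

lemma cidx_surj (hn : 0 < n) (k j : Fin n) (hj : j ≠ k) :
    ∃ d, 1 ≤ d ∧ d < n ∧ cidx hn k d = j := by
  rcases le_or_gt k.val j.val with h | h
  · refine ⟨j.val - k.val, ?_, ?_, Fin.ext ?_⟩
    · have : j.val ≠ k.val := fun hh => hj (Fin.ext hh)
      omega
    · have := j.isLt; omega
    · rw [cidx_val, Nat.mod_eq_of_lt (by have := j.isLt; omega)]; omega
  · refine ⟨j.val + n - k.val, ?_, ?_, Fin.ext ?_⟩
    · have := k.isLt; omega
    · omega
    · rw [cidx_val]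
      have he : k.val + (j.val + n - k.val) = j.val + n := by omega
      rw [he, Nat.add_mod_right, Nat.mod_eq_of_lt j.isLt]

/-- Cyclic version of the ordering lemma. -/
lemma master_cyc (hn : 3 ≤ n) (hn0 : 0 < n) (g : Fin n → Pt) (ε : ℝ)
    (horder : ∀ a b c : Fin n, a < b → b < c → 0 < ε * ddet (g a) (g b) (g c))
    (k : Fin n) {d1 d2 : ℕ} (h1 : 1 ≤ d1) (h12 : d1 < d2) (h2 : d2 < n) :
    0 < ε * ddet (g k) (g (cidx hn0 k d1)) (g (cidx hn0 k d2)) := by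
  rcases cidx_spec hn0 k h1 (by omega) with ⟨ha, hva⟩ | ⟨ha, hva⟩ <;>
    rcases cidx_spec hn0 k (by omega : 1 ≤ d2) h2 with ⟨hb, hvb⟩ | ⟨hb, hvb⟩
  · exact horder k _ _ (Fin.lt_def.mpr (by rw [hva]; omega))
      (Fin.lt_def.mpr (by rw [hva, hvb]; omega))
  · have h := horder (cidx hn0 k d2) k (cidx hn0 k d1)
      (Fin.lt_def.mpr (by rw [hvb]; omega)) (Fin.lt_def.mpr (by rw [hva]; omega))
    have e : ddet (g k) (g (cidx hn0 k d1)) (g (cidx hn0 k d2)) =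
        ddet (g (cidx hn0 k d2)) (g k) (g (cidx hn0 k d1)) := by
      simp only [ddet]; ring
    rw [e]
    exact h
  · omega
  · have h := horder (cidx hn0 k d1) (cidx hn0 k d2) k
      (Fin.lt_def.mpr (by rw [hva, hvb]; omega)) (Fin.lt_def.mpr (by rw [hvb]; omega))
    have e : ddet (g k) (g (cidx hn0 k d1)) (g (cidx hn0 k d2)) =
        ddet (g (cidx hn0 k d1)) (g (cidx hn0 k d2)) (g k) := by
      simp only [ddet]; ring
    rw [e]
    exact h

lemma plucker_center (c p x1 x2 x3 : Pt) :
    - ddet c p x1 * ddet p x2 x3 + ddet c p x2 * ddet p x1 x3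
      - ddet c p x3 * ddet p x1 x2 = 0 := by
  simp only [ddet]; ring

/-- No alternation of the center line's sides along the cyclic order. -/
lemma no_altern (hn : 3 ≤ n) (hn0 : 0 < n) (g : Fin n → Pt) (ε : ℝ) (hε : ε = 1 ∨ ε = -1)
    (horder : ∀ a b c : Fin n, a < b → b < c → 0 < ε * ddet (g a) (g b) (g c))
    (c : Pt) (k : Fin n) {d1 d2 d3 : ℕ}
    (h1 : 1 ≤ d1) (h12 : d1 < d2) (h23 : d2 < d3) (h3 : d3 < n) :
    ¬(ddet c (g k) (g (cidx hn0 k d1)) * ddet c (g k) (g (cidx hn0 k d2)) < 0 ∧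
      ddet c (g k) (g (cidx hn0 k d2)) * ddet c (g k) (g (cidx hn0 k d3)) < 0) := by
  rintro ⟨hA, hB⟩
  have hP1 := master_cyc hn hn0 g ε horder k (show 1 ≤ d2 by omega) h23 h3
  have hP2 := master_cyc hn hn0 g ε horder k h1 (show d1 < d3 by omega) h3
  have hP3 := master_cyc hn hn0 g ε horder k h1 h12 (by omega)
  have key := plucker_center c (g k) (g (cidx hn0 k d1)) (g (cidx hn0 k d2)) (g (cidx hn0 k d3))
  have ht2ne : ddet c (g k) (g (cidx hn0 k d2)) ≠ 0 := by
    intro h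
    rw [h] at hA
    simp at hA
  have h2sq : 0 < ddet c (g k) (g (cidx hn0 k d2)) * ddet c (g k) (g (cidx hn0 k d2)) :=
    mul_self_pos.mpr ht2ne
  have key2 : -(ddet c (g k) (g (cidx hn0 k d1)) * ddet c (g k) (g (cidx hn0 k d2))) *
        (ε * ddet (g k) (g (cidx hn0 k d2)) (g (cidx hn0 k d3)))
      + (ddet c (g k) (g (cidx hn0 k d2)) * ddet c (g k) (g (cidx hn0 k d2))) *
        (ε * ddet (g k) (g (cidx hn0 k d1)) (g (cidx hn0 k d3)))
      - (ddet c (g k) (g (cidx hn0 k d2)) * ddet c (g k) (g (cidx hn0 k d3))) *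
        (ε * ddet (g k) (g (cidx hn0 k d1)) (g (cidx hn0 k d2))) = 0 := by
    linear_combination (ε * ddet c (g k) (g (cidx hn0 k d2))) * key
  nlinarith [mul_neg_of_neg_of_pos hA hP1, mul_pos h2sq hP2, mul_neg_of_neg_of_pos hB hP3, key2]

end PartIVTools

section InteriorLemma

lemma ddet_self (p q : Pt) : ddet p q p = 0 := by simp only [ddet]; ring

lemma interior_not_one_side {n : ℕ} (hn : 3 ≤ n) (hn0 : 0 < n) (g : Fin n → Pt) (c : Pt)
    (hint : c ∈ interior (convexHull ℝ (Set.range g)))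
    (k : Fin n) (hck : c ≠ g k)
    (h0 : ∀ d, 1 ≤ d → d ≤ n - 1 → ddet c (g k) (g (cidx hn0 k d)) ≠ 0) :
    ∃ d1 d2, 1 ≤ d1 ∧ d1 < d2 ∧ d2 ≤ n - 1 ∧
      ddet c (g k) (g (cidx hn0 k d1)) * ddet c (g k) (g (cidx hn0 k d2)) < 0 := by
  by_contra hcon
  push_neg at hcon
  have ht1 : ddet c (g k) (g (cidx hn0 k 1)) ≠ 0 := h0 1 le_rfl (by omega)
  set σ : ℝ := if 0 < ddet c (g k) (g (cidx hn0 k 1)) then 1 else -1 with hσ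
  have hσ2 : σ * σ = 1 := by rw [hσ]; split <;> norm_num
  have hσ1 : 0 < σ * ddet c (g k) (g (cidx hn0 k 1)) := by
    rw [hσ]; split
    · rename_i h; simpa using h
    · rename_i h
      have : ddet c (g k) (g (cidx hn0 k 1)) < 0 := ht1.lt_of_le (not_lt.mp h)
      nlinarith
  have hA : ∀ j : Fin n, 0 ≤ σ * ddet c (g k) (g j) := by
    intro j
    by_cases hjk : j = k
    · rw [hjk]
      have : ddet c (g k) (g k) = 0 := by simp only [ddet]; ring
      rw [this]; simp
    · obtain ⟨d, hd1, hdn, hdj⟩ := cidx_surj hn0 k j hjk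
      rcases eq_or_lt_of_le hd1 with he | hlt
      · rw [← hdj, ← he]
        exact le_of_lt hσ1
      · have hprod := hcon 1 d le_rfl hlt (by omega)
        have hdne := h0 d hd1 (by omega)
        rw [← hdj]
        nlinarith [hσ1, hprod, hσ2, mul_self_nonneg σ]
  -- the convex hull lies in the nonnegative side
  have hhull : convexHull ℝ (Set.range g) ⊆ {x : Pt | 0 ≤ σ * ddet c (g k) x} := by
    apply convexHull_min
    · rintro x ⟨j, rfl⟩
      exact hA j
    · intro x hx y hy a b ha hb hab
      simp only [Set.mem_setOf_eq] at *
      rw [ddet_affine c (g k) x y a b hab]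
      nlinarith
  have hcint : c ∈ interior {x : Pt | 0 ≤ σ * ddet c (g k) x} :=
    interior_mono hhull hint
  -- construct a direction along which the functional is negative
  set w : Pt := (σ * ((g k).2 - c.2), -(σ * ((g k).1 - c.1))) with hw
  have hNrm : 0 < ((g k).1 - c.1)^2 + ((g k).2 - c.2)^2 := by
    rcases Prod.ext_iff.not.mp hck with h
    by_contra hle
    push_neg at hle
    have h1 : ((g k).1 - c.1)^2 = 0 := by nlinarith [sq_nonneg ((g k).1 - c.1), sq_nonneg ((g k).2 - c.2)]
    have h2 : ((g k).2 - c.2)^2 = 0 := by nlinarith [sq_nonneg ((g k).1 - c.1), sq_nonneg ((g k).2 - c.2)]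
    apply h
    constructor
    · have := pow_eq_zero_iff (n := 2) (by norm_num) |>.mp h1; linarith
    · have := pow_eq_zero_iff (n := 2) (by norm_num) |>.mp h2; linarith
  have hAval : ∀ s : ℝ, σ * ddet c (g k) (c + s • w) =
      -s * (σ * σ) * (((g k).1 - c.1)^2 + ((g k).2 - c.2)^2) := by
    intro s
    simp only [ddet, hw, Prod.fst_add, Prod.snd_add, Prod.smul_fst, Prod.smul_snd, smul_eq_mul]
    ring
  have hγ : Continuous (fun s : ℝ => c + s • w) := by fun_prop
  have hopen : IsOpen ((fun s : ℝ => c + s • w) ⁻¹' interior {x : Pt | 0 ≤ σ * ddet c (g k) x}) :=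
    isOpen_interior.preimage hγ
  have h0mem : (0:ℝ) ∈ (fun s : ℝ => c + s • w) ⁻¹' interior {x : Pt | 0 ≤ σ * ddet c (g k) x} := by
    simp only [Set.mem_preimage, zero_smul, add_zero]
    exact hcint
  rw [Metric.isOpen_iff] at hopen
  obtain ⟨r, hr, hball⟩ := hopen 0 h0mem
  have hsmem : (r/2) ∈ Metric.ball (0:ℝ) r := by
    simp only [Metric.mem_ball, Real.dist_0_eq_abs]
    rw [abs_of_pos (by linarith)]
    linarith
  have := hball hsmem
  simp only [Set.mem_preimage] at this
  have hin := interior_subset this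
  simp only [Set.mem_setOf_eq] at hin
  rw [hAval (r/2), hσ2] at hin
  nlinarith

end InteriorLemma

section PartIV

open Classical in
lemma part_iv {n : ℕ} (hn : 3 ≤ n) (f : Fin (n + 1) → Pt) (hf : IsRectDrawing f)
    (hhull : HullCycle (fun i : Fin n => f i.succ))
    (hint : f 0 ∈ interior (convexHull ℝ (Set.range fun i : Fin n => f i.succ))) :
    drawingCrossings (cycleWithIsolated n) f = n := by
  have hn0 : (0:ℕ) < n := by omega
  have hinj : Function.Injective f := hf.1
  have hgen := hf.2.2
  have hd : ∀ a b c : Fin (n+1), a ≠ b → a ≠ c → b ≠ c → ddet (f a) (f b) (f c) ≠ 0 := by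
    intro a b c hab hac hbc h0
    exact hgen (f a) ⟨a, rfl⟩ (f b) ⟨b, rfl⟩ (f c) ⟨c, rfl⟩ (fun h => hab (hinj h))
      (fun h => hac (hinj h)) (fun h => hbc (hinj h)) (collinear_of_ddet_eq_zero h0)
  set g : Fin n → Pt := fun i => f i.succ with hg
  have hinjg : Function.Injective g := fun a b h => Fin.succ_injective _ (hinj h)
  have hdg : ∀ a b c : Fin n, a ≠ b → a ≠ c → b ≠ c → ddet (g a) (g b) (g c) ≠ 0 :=
    fun a b c h1 h2 h3 => hd a.succ b.succ c.succ
      (fun h => h1 (Fin.succ_injective _ h)) (fun h => h2 (Fin.succ_injective _ h))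
      (fun h => h3 (Fin.succ_injective _ h))
  obtain ⟨ε, hε, hH⟩ := hull_sign hn g hinjg hdg hhull
  have horder := master_fin hn g ε hH
  set c : Pt := f 0 with hc
  have tnz : ∀ (k : Fin n) (d : ℕ), 1 ≤ d → d ≤ n - 1 →
      ddet c (g k) (g (cidx hn0 k d)) ≠ 0 := by
    intro k d h1 h2
    exact hd 0 k.succ (cidx hn0 k d).succ (Fin.succ_ne_zero k).symm
      (Fin.succ_ne_zero _).symm
      (fun h => (cidx_ne hn0 k h1 (by omega)) (Fin.succ_injective _ h).symm)
  have hck : ∀ k : Fin n, c ≠ g k := fun k h => (Fin.succ_ne_zero k) (hinj h).symm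
  have hexch : ∀ k : Fin n, ∃! d, 1 ≤ d ∧ d < n - 1 ∧
      ddet c (g k) (g (cidx hn0 k d)) * ddet c (g k) (g (cidx hn0 k (d+1))) < 0 := by
    intro k
    apply sign_changes_unique (n-1) (fun d => ddet c (g k) (g (cidx hn0 k d)))
    · exact fun d h1 h2 => tnz k d h1 h2
    · obtain ⟨d1, d2, h1, h12, h2, hprod⟩ :=
        interior_not_one_side hn hn0 g c hint k (hck k) (tnz k)
      exact ⟨d1, d2, h1, h12, h2, hprod⟩
    · intro d1 d2 d3 h1 h12 h23 h3
      exact no_altern hn hn0 g ε hε horder c k h1 h12 h23 (by omega)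
  -- no separation of a cycle edge by a chord of two outer points
  have nosep_outer : ∀ i a b : Fin n, a ≠ b → a ≠ i → a ≠ nextFin i → b ≠ i →
      b ≠ nextFin i → ¬ Separates (lineThrough (g a) (g b)) (g i) (g (nextFin i)) := by
    intro i a b hab hai hani hbi hbni
    have core : ∀ a b : Fin n, a < b → a ≠ i → a ≠ nextFin i → b ≠ i → b ≠ nextFin i →
        ¬ Separates (lineThrough (g a) (g b)) (g i) (g (nextFin i)) := by
      intro a b hab hai hani hbi hbni
      have hfab : g a ≠ g b := fun h => (Fin.lt_def.mp hab).ne (congrArg Fin.val (hinjg h))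
      have hai' : a.val ≠ i.val := fun h => hai (Fin.ext h)
      have hbi' : b.val ≠ i.val := fun h => hbi (Fin.ext h)
      have hani' : a.val ≠ (nextFin i).val := fun h => hani (Fin.ext h)
      have hbni' : b.val ≠ (nextFin i).val := fun h => hbni (Fin.ext h)
      have habv : a.val < b.val := Fin.lt_def.mp hab
      rcases Nat.lt_or_ge (i.val + 1) n with hlt | hge
      · have hni : (nextFin i).val = i.val + 1 := Nat.mod_eq_of_lt hlt
        rcases show (i.val < a.val ∧ (nextFin i).val < a.val) ∨
            (b.val < i.val ∧ b.val < (nextFin i).val) ∨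
            (a.val < i.val ∧ i.val < b.val ∧ a.val < (nextFin i).val ∧ (nextFin i).val < b.val)
            by omega with
          ⟨h1, h2⟩ | ⟨h1, h2⟩ | ⟨h1, h2, h3, h4⟩
        · exact nosep_out hε horder hfab hab (Or.inl (Fin.lt_def.mpr h1))
            (Or.inl (Fin.lt_def.mpr h2))
        · exact nosep_out hε horder hfab hab (Or.inr (Fin.lt_def.mpr h1))
            (Or.inr (Fin.lt_def.mpr h2))
        · exact nosep_in hε horder hfab hab ⟨Fin.lt_def.mpr h1, Fin.lt_def.mpr h2⟩
            ⟨Fin.lt_def.mpr h3, Fin.lt_def.mpr h4⟩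
      · have hieq : i.val = n - 1 := by have := i.isLt; omega
        have hni : (nextFin i).val = 0 := by
          show (i.val + 1) % n = 0
          rw [show i.val + 1 = n by omega, Nat.mod_self]
        have h1 : b.val < i.val := by have := b.isLt; omega
        have h2 : (nextFin i).val < a.val := by omega
        exact nosep_out hε horder hfab hab (Or.inr (Fin.lt_def.mpr h1))
          (Or.inl (Fin.lt_def.mpr h2))
    rcases Fin.lt_or_lt_of_ne hab with h | h
    · exact core a b h hai hani hbi hbni
    · intro hsep
      exact core b a h hbi hbni hai hani (by rw [lineThrough_comm]; exact hsep)
  rw [drawingCrossings_cycle n hn f]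
  have hcount : ∀ i : Fin n, sepCount f i.succ ((nextFin i).succ)
      = (Finset.filter (fun k : Fin n => k ≠ i ∧ k ≠ nextFin i ∧
          Separates (lineThrough c (g k)) (g i) (g (nextFin i))) Finset.univ).card := by
    intro i
    unfold sepCount
    have hsetEq : {e : Finset (Fin (n+1)) | ∃ a b : Fin (n+1), e = {a, b} ∧ a ≠ b ∧
          i.succ ∉ e ∧ (nextFin i).succ ∉ e ∧
          Separates (lineThrough (f a) (f b)) (f i.succ) (f ((nextFin i).succ))}
        = ↑(Finset.image (fun k : Fin n => ({0, k.succ} : Finset (Fin (n+1))))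
            (Finset.filter (fun k : Fin n => k ≠ i ∧ k ≠ nextFin i ∧
              Separates (lineThrough c (g k)) (g i) (g (nextFin i))) Finset.univ)) := by
      ext e
      simp only [Set.mem_setOf_eq, Finset.coe_image, Set.mem_image, Finset.mem_coe,
        Finset.mem_filter, Finset.mem_univ, true_and]
      constructor
      · rintro ⟨a, b, rfl, hab, hse, hte, hsep⟩
        simp only [Finset.mem_insert, Finset.mem_singleton, not_or] at hse hte
        obtain ⟨hsa, hsb⟩ := hse
        obtain ⟨hta, htb⟩ := hte
        by_cases ha0 : a = 0
        · subst ha0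
          obtain ⟨k, rfl⟩ := Fin.eq_succ_of_ne_zero (Ne.symm hab)
          refine ⟨k, ⟨?_, ?_, ?_⟩, rfl⟩
          · exact fun h => hsb (by rw [h])
          · exact fun h => htb (by rw [h])
          · exact hsep
        · by_cases hb0 : b = 0
          · subst hb0
            obtain ⟨k, rfl⟩ := Fin.eq_succ_of_ne_zero ha0
            refine ⟨k, ⟨?_, ?_, ?_⟩, ?_⟩
            · exact fun h => hsa (by rw [h])
            · exact fun h => hta (by rw [h])
            · rw [show lineThrough c (g k) = lineThrough (f k.succ) (f 0) from
                lineThrough_comm _ _]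
              exact hsep
            · rw [Finset.pair_comm]
          · exfalso
            obtain ⟨a', rfl⟩ := Fin.eq_succ_of_ne_zero ha0
            obtain ⟨b', rfl⟩ := Fin.eq_succ_of_ne_zero hb0
            exact nosep_outer i a' b' (fun h => hab (by rw [h]))
              (fun h => hsa (by rw [h])) (fun h => hta (by rw [h]))
              (fun h => hsb (by rw [h])) (fun h => htb (by rw [h])) hsep
      · rintro ⟨k, ⟨hki, hkni, hsep⟩, rfl⟩
        refine ⟨0, k.succ, rfl, (Fin.succ_ne_zero k).symm, ?_, ?_, hsep⟩
        · simp only [Finset.mem_insert, Finset.mem_singleton, not_or]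
          exact ⟨Fin.succ_ne_zero i, fun h => hki (Fin.succ_injective _ h).symm⟩
        · simp only [Finset.mem_insert, Finset.mem_singleton, not_or]
          exact ⟨Fin.succ_ne_zero _, fun h => hkni (Fin.succ_injective _ h).symm⟩
    rw [hsetEq, Set.ncard_coe_finset]
    apply Finset.card_image_of_injOn
    intro k _ k' _ hkk'
    have hkk'' : ({0, k.succ} : Finset (Fin (n+1))) = {0, k'.succ} := hkk'
    have : k.succ ∈ ({0, k'.succ} : Finset (Fin (n+1))) := by rw [← hkk'']; simp
    simp only [Finset.mem_insert, Finset.mem_singleton] at this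
    rcases this with h | h
    · exact absurd h (Fin.succ_ne_zero k)
    · exact Fin.succ_injective _ h
  have hone : ∀ k : Fin n, (Finset.filter (fun i : Fin n => k ≠ i ∧ k ≠ nextFin i ∧
      Separates (lineThrough c (g k)) (g i) (g (nextFin i))) Finset.univ).card = 1 := by
    intro k
    obtain ⟨d0, ⟨hd01, hd0N, hd0sep⟩, hd0uniq⟩ := hexch k
    rw [Finset.card_eq_one]
    refine ⟨cidx hn0 k d0, ?_⟩
    ext i
    simp only [Finset.mem_filter, Finset.mem_univ, true_and, Finset.mem_singleton]
    constructor
    · rintro ⟨hki, hkni, hsep⟩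
      obtain ⟨d, h1, hdn, rfl⟩ := cidx_surj hn0 k i (Ne.symm hki)
      have hd2 : d < n - 1 := by
        rcases eq_or_lt_of_le (show d + 1 ≤ n by omega) with he | hlt
        · exfalso
          apply hkni
          rw [cidx_nextFin, he]
          apply Fin.ext
          rw [cidx_val, Nat.add_mod_right, Nat.mod_eq_of_lt k.isLt]
        · omega
      rw [sep_iff (hck k)] at hsep
      rw [cidx_nextFin] at hsep
      have := hd0uniq d ⟨h1, hd2, hsep⟩
      rw [this]
    · rintro rfl
      refine ⟨(cidx_ne hn0 k hd01 (by omega)).symm, ?_, ?_⟩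
      · rw [cidx_nextFin]
        exact (cidx_ne hn0 k (by omega) (by omega)).symm
      · rw [sep_iff (hck k), cidx_nextFin]
        exact hd0sep
  calc ∑ i : Fin n, sepCount f i.succ ((nextFin i).succ)
      = ∑ i : Fin n, (Finset.filter (fun k : Fin n => k ≠ i ∧ k ≠ nextFin i ∧
          Separates (lineThrough c (g k)) (g i) (g (nextFin i))) Finset.univ).card :=
        Finset.sum_congr rfl (fun i _ => hcount i)
    _ = ∑ k : Fin n, (Finset.filter (fun i : Fin n => k ≠ i ∧ k ≠ nextFin i ∧
          Separates (lineThrough c (g k)) (g i) (g (nextFin i))) Finset.univ).card := by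
        simp_rw [Finset.card_filter]
        exact Finset.sum_comm
    _ = ∑ _k : Fin n, 1 := Finset.sum_congr rfl (fun k _ => hone k)
    _ = n := by simp

end PartIV

end AuxOrchard


/-- For n ≥ 3, consider the graph on `n+1` vertices formed by a cycle
`C_n` on the vertices `1, …, n` together with the isolated vertex `0`.
(i) Any rectilinear drawing placing all `n+1` points in convex position with the cycle
along consecutive positions of the convex polygon has crossing number `n - 2`;
(ii) in particular `OCN ≤ n - 2`, and `n - 2 < n`, where
(iii) `n` is the crossing number of any drawing placing the `n` cycle vertices in
convex position (in cyclic order) with the isolated vertex inside. -/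
theorem stmt_18 (n : ℕ) (hn : 3 ≤ n) :
    (∀ f : Fin (n + 1) → Pt, IsRectDrawing f →
      ConvexPosition (Set.range f) → HullCycle f →
      drawingCrossings (cycleWithIsolated n) f = n - 2) ∧
    OCN (cycleWithIsolated n) ≤ n - 2 ∧ n - 2 < n ∧
    (∀ f : Fin (n + 1) → Pt, IsRectDrawing f →
      ConvexPosition (Set.range fun i : Fin n => f i.succ) →
      HullCycle (fun i : Fin n => f i.succ) →
      f 0 ∈ interior (convexHull ℝ (Set.range fun i : Fin n => f i.succ)) →
      drawingCrossings (cycleWithIsolated n) f = n) := by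
  refine ⟨?_, ?_, by omega, ?_⟩
  · intro f hf _ hhull
    exact part_i hn f hf hhull
  · have hdraw := paraF_rect (n+1)
    have hhullp := paraF_hull (m := n+1) (by omega)
    have hval := part_i hn (paraF (n+1)) hdraw hhullp
    exact Nat.sInf_le ⟨paraF (n+1), hdraw, hval⟩
  · intro f hf _ hhull hint
    exact part_iv hn f hf hhull hint
end
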